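/- arXiv:2403.15602 — 10 statements merged into one kernel-verified Lean document; each statement's English description precedes it below -/
import Mathlib

section
/- For every n ≥ 9, there exists an n-vertex rainbow C_5-saturated graph with at most ⌊5n/2⌋ − 4 edges; consequently sat*(n, C_5) ≤ ⌊5n/2⌋ − 4. -/
/-- A proper edge-coloring: any two distinct edges of `G` sharing a vertex
receive different colors. -/
def ProperEdgeColoring {V : Type*} (G : SimpleGraph V) (c : Sym2 V → ℕ) : Prop :=
  ∀ e₁ ∈ G.edgeSet, ∀ e₂ ∈ G.edgeSet, e₁ ≠ e₂ → (∃ v, v ∈ e₁ ∧ v ∈ e₂) → c e₁ ≠ c e₂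

/-- `G` contains a rainbow copy of the cycle `C_k` under the edge-coloring `c`:
there are `k` distinct vertices, cyclically consecutive ones adjacent, whose
`k` cycle edges receive pairwise distinct colors. -/
def HasRainbowCycle {V : Type*} (G : SimpleGraph V) (c : Sym2 V → ℕ) (k : ℕ) : Prop :=
  ∃ f : ZMod k → V, Function.Injective f ∧ (∀ i, G.Adj (f i) (f (i + 1))) ∧
    Function.Injective (fun i : ZMod k => c s(f i, f (i + 1)))

/-- `G` is (properly) rainbow `C_k`-saturated: some proper edge-coloring of `G`
has no rainbow `C_k`-copy, but for every pair of nonadjacent vertices `x, y`,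
every proper edge-coloring of `G + xy` contains a rainbow `C_k`-copy. -/
def RainbowSat {V : Type*} (G : SimpleGraph V) (k : ℕ) : Prop :=
  (∃ c, ProperEdgeColoring G c ∧ ¬ HasRainbowCycle G c k) ∧
  ∀ x y : V, x ≠ y → ¬ G.Adj x y →
    ∀ c, ProperEdgeColoring (G ⊔ SimpleGraph.fromEdgeSet {s(x, y)}) c →
      HasRainbowCycle (G ⊔ SimpleGraph.fromEdgeSet {s(x, y)}) c k

/-!
The graph has two universal vertices `0, 1`, and the remaining vertices are matched by
`m ∼ m ^^^ 1` (one is left unmatched when `n` is odd). Its degrees are `n - 1` at the two hubs and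
at most `3` elsewhere, so twice its number of edges is at most `5n - 8`.
Colouring each edge `xy` by `x ^^^ y` is proper. Since the vertices other than `0, 1` span a
matching, every 5-cycle reads `h, a, h', b, b'` with `{h, h'} = {0, 1}` and `b' = b ^^^ 1`, and then
`h'b` and `b'h` both get the colour `h ^^^ b ^^^ 1`, so no 5-cycle is rainbow.

Conversely, let `h, h'` be universal vertices and `ab` an edge avoiding them in a graph with a
proper colouring and no rainbow `C₅`. Each of the at least five further vertices `z` closes a
5-cycle `h z h' a b`, which is not rainbow; if `c(h'a) ≠ c(hb)`, this forces `c(hz)` or `c(h'z)`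
to equal one of four fixed colours, which properness allows for at most four vertices `z` in
total. Hence `c(h'a) = c(hb)`. After adding a non-edge `xy` with `x' = x ^^^ 1` a vertex, this applies to the
edges `xy` and `x'x`, giving `c(0y) = c(1x) = c(0x')`, so `y = x'`, although `xx'` is an edge.
-/

open Finset

namespace ProperEdgeColoring

variable {V : Type*} {G : SimpleGraph V} {c : Sym2 V → ℕ}

theorem eq_of_color_eq (hc : ProperEdgeColoring G c) {v w w' : V} (hw : G.Adj v w)
    (hw' : G.Adj v w') (h : c s(v, w) = c s(v, w')) : w = w' := by
  by_contra hne
  exact hc _ hw _ hw' (fun he => hne (Sym2.congr_right.1 he))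
    ⟨v, Sym2.mem_mk_left _ _, Sym2.mem_mk_left _ _⟩ h

theorem card_filter_color_eq_le_one (hc : ProperEdgeColoring G c) {v : V} {s : Finset V}
    (hs : ∀ w ∈ s, G.Adj v w) (α : ℕ) : #{w ∈ s | c s(v, w) = α} ≤ 1 := by
  refine card_le_one.2 fun w hw w' hw' => ?_
  rw [mem_filter] at hw hw'
  exact hc.eq_of_color_eq (hs w hw.1) (hs w' hw'.1) (hw.2.trans hw'.2.symm)

theorem hasRainbowCycle_five (hc : ProperEdgeColoring G c) {v : ZMod 5 → V}
    (hv : Function.Injective v) (hadj : ∀ i, G.Adj (v i) (v (i + 1)))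
    (hopp : ∀ i, c s(v i, v (i + 1)) ≠ c s(v (i + 2), v (i + 3))) :
    HasRainbowCycle G c 5 := by
  have hconsec : ∀ i, c s(v i, v (i + 1)) ≠ c s(v (i + 1), v (i + 2)) := by
    intro i h
    have hadj' := hadj (i + 1)
    rw [show i + 1 + 1 = i + 2 by ring] at hadj'
    have h2 : v i = v (i + 2) := hc.eq_of_color_eq (hadj i).symm hadj' (by rwa [Sym2.eq_swap])
    exact (by decide : ∀ j : ZMod 5, j ≠ j + 2) i (hv h2)
  refine ⟨v, hv, hadj, fun i j hij => by_contra fun hne => ?_⟩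
  have hij' : c s(v i, v (i + 1)) = c s(v j, v (j + 1)) := hij
  have h1 : ∀ k : ZMod 5, k + 1 + 1 = k + 2 ∧ k + 2 + 1 = k + 3 := by decide
  rcases (by decide : ∀ i j : ZMod 5, i ≠ j →
      j = i + 1 ∨ j = i + 2 ∨ i = j + 2 ∨ i = j + 1) i j hne with rfl | rfl | rfl | rfl
  · exact hconsec i (by rwa [(h1 i).1] at hij')
  · exact hopp i (by rwa [(h1 i).2] at hij')
  · exact hopp j (by rw [← (h1 j).2]; exact hij'.symm)
  · exact hconsec j (by rw [← (h1 j).1]; exact hij'.symm)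

theorem color_eq_of_universal [Fintype V] (hc : ProperEdgeColoring G c)
    (hnr : ¬HasRainbowCycle G c 5) (hV : 9 ≤ Fintype.card V) {h h' a b : V}
    (hh : ∀ z, z ≠ h → G.Adj h z) (hh' : ∀ z, z ≠ h' → G.Adj h' z) (hne : h ≠ h')
    (hab : G.Adj a b) (ha : a ≠ h) (ha' : a ≠ h') (hb : b ≠ h) (hb' : b ≠ h') :
    c s(h', a) = c s(h, b) := by
  classical
  by_contra hne'
  set Z : Finset V := {h, h', a, b}ᶜ
  have hZ : ∀ z ∈ Z, z ≠ h ∧ z ≠ h' ∧ z ≠ a ∧ z ≠ b := fun z hz => by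
    simpa [Z] using hz
  have hcover : Z ⊆ {z ∈ Z | c s(h, z) = c s(h', a)} ∪ {z ∈ Z | c s(h, z) = c s(a, b)} ∪
      {z ∈ Z | c s(h', z) = c s(a, b)} ∪ {z ∈ Z | c s(h', z) = c s(h, b)} := by
    intro z hz
    obtain ⟨hzh, hzh', hza, hzb⟩ := hZ z hz
    by_contra hmem
    simp only [mem_union, mem_filter, hz, true_and, not_or] at hmem
    obtain ⟨⟨⟨h1, h2⟩, h3⟩, h4⟩ := hmem
    let v : ZMod 5 → V := ![h, z, h', a, b]
    refine hnr (hc.hasRainbowCycle_five (v := v) ?_ ?_ ?_)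
    · show Function.Injective ![h, z, h', a, b]
      simp only [Matrix.vecCons, Fin.cons_injective_iff, Set.mem_range, Fin.exists_fin_succ]
      simp_all [eq_comm, hab.ne, Function.injective_of_subsingleton]
    · intro i
      fin_cases i
      exacts [hh z hzh, (hh' z hzh').symm, hh' a ha', hab, (hh b hb).symm]
    · intro i
      fin_cases i
      · exact h1
      · show c s(z, h') ≠ c s(a, b)
        rwa [Sym2.eq_swap]
      · show c s(h', a) ≠ c s(b, h)
        rwa [Sym2.eq_swap (a := b)]
      · exact Ne.symm h2
      · show c s(b, h) ≠ c s(z, h')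
        rw [Sym2.eq_swap, Sym2.eq_swap (a := z)]
        exact Ne.symm h4
  have hle : #Z ≤ 4 := by
    refine (card_le_card hcover).trans ?_
    have hZh : ∀ z ∈ Z, G.Adj h z := fun z hz => hh z (hZ z hz).1
    have hZh' : ∀ z ∈ Z, G.Adj h' z := fun z hz => hh' z (hZ z hz).2.1
    grw [card_union_le, card_union_le, card_union_le, hc.card_filter_color_eq_le_one hZh,
      hc.card_filter_color_eq_le_one hZh, hc.card_filter_color_eq_le_one hZh',
      hc.card_filter_color_eq_le_one hZh']
  have hge : Fintype.card V - 4 ≤ #Z := by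
    rw [card_compl]
    exact Nat.sub_le_sub_left card_le_four _
  omega

end ProperEdgeColoring

theorem SimpleGraph.two_mul_card_edgeFinset_le {V : Type*} [Fintype V] (G : SimpleGraph V)
    [DecidableRel G.Adj] (s : Finset V) {d : ℕ} (hd : ∀ v ∉ s, G.degree v ≤ d) :
    2 * #G.edgeFinset ≤ #s * (Fintype.card V - 1) + (Fintype.card V - #s) * d := by
  classical
  rw [← G.sum_degrees_eq_twice_card_edges, ← sum_add_sum_compl s, ← card_compl]
  have hs : ∑ v ∈ s, G.degree v ≤ #s * (Fintype.card V - 1) := by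
    simpa using sum_le_card_nsmul s _ _ fun v _ => Nat.le_sub_one_of_lt (G.degree_lt_card_verts v)
  have hsc : ∑ v ∈ sᶜ, G.degree v ≤ #sᶜ * d := by
    simpa using sum_le_card_nsmul sᶜ _ _ fun v hv => hd v (mem_compl.1 hv)
  omega

theorem Nat.xor_one_eq_ite (m : ℕ) : m ^^^ 1 = if m % 2 = 0 then m + 1 else m - 1 := by
  split_ifs with h
  · exact xor_one_of_even (even_iff.2 h)
  · exact xor_one_of_odd (odd_iff.2 (by omega))

theorem Nat.xor_eq_xor_of_xor_eq_one {a b c d : ℕ} (hac : a ^^^ c = 1) (hbd : b ^^^ d = 1) :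
    c ^^^ d = b ^^^ a := by
  rw [← Nat.xor_xor_cancel_left a c, hac, ← Nat.xor_xor_cancel_left b d, hbd]
  ac_nf
  simp

theorem Nat.xor_eq_one_of_lt_two {a b : ℕ} (ha : a < 2) (hb : b < 2) (hab : a ≠ b) :
    a ^^^ b = 1 := by
  interval_cases a <;> interval_cases b <;> simp_all

theorem ZMod.exists_two_apart_of_no_three_of_no_gap (P : ZMod 5 → Prop) [DecidablePred P]
    (hthree : ∀ i j k, P i → P j → P k → i = j ∨ j = k ∨ i = k)
    (hgap : ∀ i, P i ∨ P (i + 1) ∨ P (i + 2)) :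
    ∃ i, P i ∧ P (i + 2) ∧ ¬P (i + 3) ∧ ¬P (i + 4) := by
  have key : ∀ b : ZMod 5 → Bool, (∀ i j k, b i → b j → b k → i = j ∨ j = k ∨ i = k) →
      (∀ i, b i ∨ b (i + 1) ∨ b (i + 2)) →
      ∃ i, b i ∧ b (i + 2) ∧ ¬b (i + 3) ∧ ¬b (i + 4) := by
    decide
  simpa using key (fun i => decide (P i)) (by simpa using hthree) (by simpa using hgap)

def hubMatching (n : ℕ) : SimpleGraph (Fin n) where
  Adj x y := x ≠ y ∧ (x.val < 2 ∨ y.val < 2 ∨ x.val ^^^ y.val = 1)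
  symm := ⟨fun _ _ ⟨hne, h⟩ => ⟨hne.symm, by rw [Nat.xor_comm]; tauto⟩⟩
  loopless := ⟨fun _ h => h.1 rfl⟩

theorem hubMatching_adj {n : ℕ} {x y : Fin n} :
    (hubMatching n).Adj x y ↔ x ≠ y ∧ (x.val < 2 ∨ y.val < 2 ∨ x.val ^^^ y.val = 1) :=
  Iff.rfl

instance (n : ℕ) : DecidableRel (hubMatching n).Adj :=
  fun _ _ => decidable_of_iff _ hubMatching_adj.symm

def xorColoring {V : Type*} (ℓ : V → ℕ) : Sym2 V → ℕ :=
  Sym2.lift ⟨fun x y => ℓ x ^^^ ℓ y, fun _ _ => Nat.xor_comm _ _⟩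

theorem properEdgeColoring_xorColoring {V : Type*} (G : SimpleGraph V) {ℓ : V → ℕ}
    (hℓ : Function.Injective ℓ) : ProperEdgeColoring G (xorColoring ℓ) := by
  rintro e₁ - e₂ - hne ⟨v, hv₁, hv₂⟩ heq
  obtain ⟨w, rfl⟩ := Sym2.mem_iff_exists.1 hv₁
  obtain ⟨w', rfl⟩ := Sym2.mem_iff_exists.1 hv₂
  exact hne (congrArg _ (hℓ (Nat.xor_right_inj.1 heq)))

namespace hubMatching

variable {n : ℕ}

theorem adj_of_val_lt_two {x y : Fin n} (hx : x.val < 2) (hxy : x ≠ y) :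
    (hubMatching n).Adj x y :=
  hubMatching_adj.2 ⟨hxy, Or.inl hx⟩

theorem xor_eq_one_of_adj {x y : Fin n} (h : (hubMatching n).Adj x y) (hx : 2 ≤ x.val)
    (hy : 2 ≤ y.val) : x.val ^^^ y.val = 1 := by
  obtain ⟨-, h | h | h⟩ := hubMatching_adj.1 h <;> omega

theorem val_lt_two_of_adj_of_adj {u v w : Fin n} (huv : (hubMatching n).Adj u v)
    (hvw : (hubMatching n).Adj v w) (huw : u ≠ w) : u.val < 2 ∨ v.val < 2 ∨ w.val < 2 := by
  by_contra! h
  have h₁ := xor_eq_one_of_adj huv h.1 h.2.1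
  have h₂ := xor_eq_one_of_adj hvw.symm h.2.2 h.2.1
  exact huw (Fin.ext (Nat.xor_left_inj.1 (h₁.trans h₂.symm)))

theorem degree_le_three {v : Fin n} (hv : 2 ≤ v.val) : (hubMatching n).degree v ≤ 3 := by
  rw [← SimpleGraph.card_neighborFinset_eq_degree]
  refine (card_le_card_of_injOn Fin.val (t := {0, 1, v.val ^^^ 1}) ?_
    Fin.val_injective.injOn).trans card_le_three
  intro w hw
  obtain ⟨-, h | h | h⟩ :=
    hubMatching_adj.1 ((SimpleGraph.mem_neighborFinset _ _ _).1 (mem_coe.1 hw))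
  · omega
  · simp only [coe_insert, coe_singleton, Set.mem_insert_iff, Set.mem_singleton_iff]
    omega
  · simp [← h]

theorem ncard_edgeSet_le (hn : 2 ≤ n) : (hubMatching n).edgeSet.ncard ≤ 5 * n / 2 - 4 := by
  have h := (hubMatching n).two_mul_card_edgeFinset_le {v | v.val < 2} (d := 3)
    fun v hv => degree_le_three (not_lt.1 (by simpa using hv))
  rw [Fin.card_filter_val_lt, Fintype.card_fin, min_eq_right hn] at h
  rw [← SimpleGraph.coe_edgeFinset, Set.ncard_coe_finset]
  omega

theorem not_hasRainbowCycle : ¬HasRainbowCycle (hubMatching n) (xorColoring Fin.val) 5 := by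
  rintro ⟨f, hf, hadj, hcol⟩
  have hthree : ∀ i j k, (f i).val < 2 → (f j).val < 2 → (f k).val < 2 →
      i = j ∨ j = k ∨ i = k := by
    intro i j k hi hj hk
    have : (f i).val = (f j).val ∨ (f j).val = (f k).val ∨ (f i).val = (f k).val := by omega
    rcases this with h | h | h
    · exact Or.inl (hf (Fin.ext h))
    · exact Or.inr (Or.inl (hf (Fin.ext h)))
    · exact Or.inr (Or.inr (hf (Fin.ext h)))
  have hgap : ∀ i, (f i).val < 2 ∨ (f (i + 1)).val < 2 ∨ (f (i + 2)).val < 2 := by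
    intro i
    have hadj' := hadj (i + 1)
    rw [show i + 1 + 1 = i + 2 by ring] at hadj'
    exact val_lt_two_of_adj_of_adj (hadj i) hadj'
      (hf.ne ((by decide : ∀ j : ZMod 5, j ≠ j + 2) i))
  obtain ⟨i, h₀, h₂, h₃, h₄⟩ :=
    ZMod.exists_two_apart_of_no_three_of_no_gap (fun i => (f i).val < 2) hthree hgap
  have hsucc : ∀ j : ZMod 5,
      j + 2 + 1 = j + 3 ∧ j + 3 + 1 = j + 4 ∧ j + 4 + 1 = j ∧ j + 2 ≠ j ∧ j + 2 ≠ j + 4 := by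
    decide
  obtain ⟨e₂, e₃, e₄, hne₂, hne₂₄⟩ := hsucc i
  have hhub : (f i).val ^^^ (f (i + 2)).val = 1 :=
    Nat.xor_eq_one_of_lt_two h₀ h₂ fun h => hne₂ (hf (Fin.ext h)).symm
  have hpair : (f (i + 4)).val ^^^ (f (i + 3)).val = 1 := by
    have h := hadj (i + 3)
    rw [e₃] at h
    rw [Nat.xor_comm]
    exact xor_eq_one_of_adj h (not_lt.1 h₃) (not_lt.1 h₄)
  refine hne₂₄ (hcol ?_)
  show (f (i + 2)).val ^^^ (f (i + 2 + 1)).val = (f (i + 4)).val ^^^ (f (i + 4 + 1)).val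
  rw [e₂, e₄]
  exact Nat.xor_eq_xor_of_xor_eq_one hhub hpair

theorem hasRainbowCycle_sup_edge (hn : 9 ≤ n) {x y : Fin n} (hne : x ≠ y) (hx : 2 ≤ x.val)
    (hy : 2 ≤ y.val) (hxy : x.val ^^^ y.val ≠ 1) (hx' : x.val ^^^ 1 < n)
    {c : Sym2 (Fin n) → ℕ}
    (hc : ProperEdgeColoring (hubMatching n ⊔ SimpleGraph.fromEdgeSet {s(x, y)}) c) :
    HasRainbowCycle (hubMatching n ⊔ SimpleGraph.fromEdgeSet {s(x, y)}) c 5 := by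
  by_contra hnr
  let h₀ : Fin n := ⟨0, by omega⟩
  let h₁ : Fin n := ⟨1, by omega⟩
  let x' : Fin n := ⟨x.val ^^^ 1, hx'⟩
  have universal : ∀ h : Fin n, h.val < 2 → ∀ z, z ≠ h →
      (hubMatching n ⊔ SimpleGraph.fromEdgeSet {s(x, y)}).Adj h z :=
    fun h hh z hz => Or.inl (adj_of_val_lt_two hh hz.symm)
  have ne_hub : ∀ z : Fin n, 2 ≤ z.val → z ≠ h₀ ∧ z ≠ h₁ := fun z hz =>
    ⟨Fin.ne_of_val_ne (by show z.val ≠ 0; omega),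
      Fin.ne_of_val_ne (by show z.val ≠ 1; omega)⟩
  have hx'2 : 2 ≤ x'.val := by
    show 2 ≤ x.val ^^^ 1
    rw [Nat.xor_one_eq_ite]
    split_ifs <;> omega
  have hx'x : x.val ^^^ x'.val = 1 := Nat.xor_xor_cancel_left _ _
  have hadj : (hubMatching n).Adj x' x := by
    refine hubMatching_adj.2 ⟨fun h => ?_, Or.inr (Or.inr (by rw [Nat.xor_comm]; exact hx'x))⟩
    simp [h] at hx'x
  have hV : 9 ≤ Fintype.card (Fin n) := by simpa using hn
  have h₀₁ : h₀ ≠ h₁ := Fin.ne_of_val_ne zero_ne_one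
  have e₁ : c s(h₁, x) = c s(h₀, y) :=
    hc.color_eq_of_universal hnr hV (universal h₀ two_pos) (universal h₁ one_lt_two) h₀₁
      (Or.inr ⟨rfl, hne⟩) (ne_hub x hx).1 (ne_hub x hx).2 (ne_hub y hy).1 (ne_hub y hy).2
  have e₂ : c s(h₀, x') = c s(h₁, x) :=
    hc.color_eq_of_universal hnr hV (universal h₁ one_lt_two) (universal h₀ two_pos)
      h₀₁.symm (Or.inl hadj) (ne_hub x' hx'2).2 (ne_hub x' hx'2).1 (ne_hub x hx).2
      (ne_hub x hx).1
  have : x' = y := hc.eq_of_color_eq (universal h₀ two_pos x' (ne_hub x' hx'2).1)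
    (universal h₀ two_pos y (ne_hub y hy).1) (e₂.trans e₁)
  exact hxy (this ▸ hx'x)

theorem rainbowSat (hn : 9 ≤ n) : RainbowSat (hubMatching n) 5 := by
  refine ⟨⟨xorColoring Fin.val, properEdgeColoring_xorColoring _ Fin.val_injective,
    not_hasRainbowCycle⟩, fun x y hne hnadj c hc => ?_⟩
  simp only [hubMatching_adj, ne_eq, hne, not_false_eq_true, true_and, not_or, not_lt] at hnadj
  obtain ⟨hx, hy, hxy⟩ := hnadj
  have hpartner : x.val ^^^ 1 < n ∨ y.val ^^^ 1 < n := by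
    rw [Nat.xor_one_eq_ite, Nat.xor_one_eq_ite]
    have := x.isLt
    have := y.isLt
    have := Fin.val_ne_of_ne hne
    split_ifs <;> omega
  rcases hpartner with hx' | hy'
  · exact hasRainbowCycle_sup_edge hn hne hx hy hxy hx' hc
  · rw [Sym2.eq_swap] at hc ⊢
    exact hasRainbowCycle_sup_edge hn hne.symm hy hx (by rwa [Nat.xor_comm]) hy' hc

end hubMatching

/-- For every `n ≥ 9` there exists an `n`-vertex rainbow `C₅`-saturated graph with
at most `⌊5n/2⌋ − 4` edges; consequently `sat*(n, C₅) ≤ ⌊5n/2⌋ − 4`. -/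
theorem rainbow_sat_C5_upper (n : ℕ) (hn : 9 ≤ n) :
    ∃ G : SimpleGraph (Fin n), RainbowSat G 5 ∧ G.edgeSet.ncard ≤ 5 * n / 2 - 4 :=
  ⟨hubMatching n, hubMatching.rainbowSat hn, hubMatching.ncard_edgeSet_le (by omega)⟩
end

section
/- If G is a rainbow C_4-saturated graph, then for any two distinct vertices u, v of G, the distance between u and v in G is at most 3 (in particular, G is connected). -/
open SimpleGraph

lemma SimpleGraph.exists_walk_length_eq_pred_of_forall_ne_adj {V : Type*} {G : SimpleGraph V}
    {k : ℕ} (hk : 0 < k) (f : ZMod k → V) (i : ZMod k)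
    (hadj : ∀ j, j ≠ i → G.Adj (f j) (f (j + 1))) :
    ∃ p : G.Walk (f (i + 1)) (f i), p.length = k - 1 := by
  have partial_walk : ∀ m < k, ∃ p : G.Walk (f (i + 1)) (f (i + 1 + m)), p.length = m := by
    intro m
    induction m with
    | zero => exact fun _ => ⟨Walk.nil.copy rfl (by simp), by simp⟩
    | succ m ih =>
      intro hm
      obtain ⟨p, hp⟩ := ih (by omega)
      have hne : i + 1 + m ≠ i := by
        intro h
        have h0 : ((m + 1 : ℕ) : ZMod k) = 0 := by
          push_cast
          linear_combination h
        rw [ZMod.natCast_eq_zero_iff] at h0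
        exact absurd (Nat.le_of_dvd (by omega) h0) (by omega)
      refine ⟨(p.concat (hadj _ hne)).copy rfl (by push_cast; ring_nf), ?_⟩
      simp [hp]
  obtain ⟨p, hp⟩ := partial_walk (k - 1) (by omega)
  have hback : i + 1 + ((k - 1 : ℕ) : ZMod k) = i := by
    rw [Nat.cast_sub hk, ZMod.natCast_self]
    ring
  exact ⟨p.copy rfl (by rw [hback]), by simp [hp]⟩

namespace ProperEdgeColoring

variable {V : Type*} [DecidableEq V] {G : SimpleGraph V} {c : Sym2 V → ℕ}

lemma sup_fromEdgeSet_singleton (hc : ProperEdgeColoring G c) (e : Sym2 V) :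
    ProperEdgeColoring (G ⊔ fromEdgeSet {e}) (Function.update (c · + 1) e 0) := by
  have mem_of_ne : ∀ e' ∈ (G ⊔ fromEdgeSet {e}).edgeSet, e' ≠ e → e' ∈ G.edgeSet := by
    intro e' he' hne
    simp only [edgeSet_sup, edgeSet_fromEdgeSet, Set.mem_union, Set.mem_sdiff,
      Set.mem_singleton_iff] at he'
    tauto
  intro e₁ h₁ e₂ h₂ hne hshare
  by_cases he₁ : e₁ = e <;> by_cases he₂ : e₂ = e
  · exact absurd (he₁.trans he₂.symm) hne
  · simp [he₁, he₂]
  · simp [he₁, he₂]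
  · rw [Function.update_of_ne he₁, Function.update_of_ne he₂]
    exact fun h => hc e₁ (mem_of_ne e₁ h₁ he₁) e₂ (mem_of_ne e₂ h₂ he₂) hne hshare
      (Nat.succ_injective h)

end ProperEdgeColoring

namespace HasRainbowCycle

variable {V : Type*} [DecidableEq V] {G : SimpleGraph V} {c : Sym2 V → ℕ} {e : Sym2 V}
  {k : ℕ}

lemma exists_cycle_through_of_sup_fromEdgeSet_singleton
    (h : HasRainbowCycle (G ⊔ fromEdgeSet {e}) (Function.update (c · + 1) e 0) k)
    (hG : ¬ HasRainbowCycle G c k) :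
    ∃ f : ZMod k → V, ∃ i,
      s(f i, f (i + 1)) = e ∧ ∀ j, j ≠ i → G.Adj (f j) (f (j + 1)) := by
  obtain ⟨f, hf, hadj, hcol⟩ := h
  have adj_of_ne : ∀ j, s(f j, f (j + 1)) ≠ e → G.Adj (f j) (f (j + 1)) := by
    intro j hj
    rcases (sup_adj _ _ _ _).mp (hadj j) with h | h
    · exact h
    · exact absurd ((fromEdgeSet_adj _).mp h).1 hj
  have through : ∃ i, s(f i, f (i + 1)) = e := by
    by_contra! hno
    refine hG ⟨f, hf, fun j => adj_of_ne j (hno j), fun i j hij => hcol ?_⟩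
    simp only [Function.update_of_ne (hno _)]
    exact congrArg (· + 1) hij
  obtain ⟨i, hi⟩ := through
  refine ⟨f, i, hi, fun j hj => adj_of_ne j fun hje => hj (hcol ?_)⟩
  simp only [hje, hi, Function.update_self]

end HasRainbowCycle

namespace RainbowSat

variable {V : Type*} {G : SimpleGraph V} {k : ℕ}

lemma exists_walk_length_eq_pred (hG : RainbowSat G k) (hk : 0 < k) {u v : V} (huv : u ≠ v)
    (hadj : ¬ G.Adj u v) : ∃ p : G.Walk u v, p.length = k - 1 := by
  classical
  obtain ⟨⟨c, hc, hfree⟩, hsat⟩ := hG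
  have hcycle := hsat u v huv hadj _ (hc.sup_fromEdgeSet_singleton s(u, v))
  obtain ⟨f, i, hi, hpath⟩ := hcycle.exists_cycle_through_of_sup_fromEdgeSet_singleton hfree
  obtain ⟨p, hp⟩ := exists_walk_length_eq_pred_of_forall_ne_adj hk f i hpath
  rcases Sym2.eq_iff.mp hi with ⟨rfl, rfl⟩ | ⟨rfl, rfl⟩
  · exact ⟨p.reverse, by simp [hp]⟩
  · exact ⟨p, hp⟩

lemma reachable_and_dist_le (hG : RainbowSat G k) (hk : 2 ≤ k) {u v : V} (huv : u ≠ v) :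
    G.Reachable u v ∧ G.dist u v ≤ k - 1 := by
  by_cases hadj : G.Adj u v
  · exact ⟨hadj.reachable, (dist_eq_one_iff_adj.mpr hadj).trans_le (by omega)⟩
  · obtain ⟨p, hp⟩ := hG.exists_walk_length_eq_pred (by omega) huv hadj
    exact ⟨⟨p⟩, hp ▸ dist_le p⟩

end RainbowSat

theorem rainbow_sat_C4_dist_le_three_general {V : Type*}
    (G : SimpleGraph V) (hG : RainbowSat G 4) :
    ∀ u v : V, u ≠ v → G.Reachable u v ∧ G.dist u v ≤ 3 :=
  fun _ _ huv => hG.reachable_and_dist_le le_add_self huv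

/-- In a rainbow `C₄`-saturated graph, any two distinct vertices are at distance
at most 3 (in particular the graph is connected). -/
theorem rainbow_sat_C4_dist_le_three {V : Type*} [Fintype V]
    (G : SimpleGraph V) (hG : RainbowSat G 4) :
    ∀ u v : V, u ≠ v → G.Reachable u v ∧ G.dist u v ≤ 3 :=
  rainbow_sat_C4_dist_le_three_general G hG
end

section
/- If G is a rainbow C_4-saturated graph, then for any two distinct vertices u, v of G, the number of common neighbors of u and v satisfies |N(u) ∩ N(v)| < 4. -/
/-!
Fix a proper edge-coloring `c` of `G` with no rainbow `C₄`. If `x ≠ y` are common neighbours of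
`u ≠ v`, consecutive edges of the 4-cycle `u x v y` get different colors by properness, so the
cycle can only fail to be rainbow through its opposite edges: `c(ux) = c(vy)` or `c(uy) = c(vx)`.
Orient the pair `{x, y}` from `x` to `y` when `c(ux) = c(vy)`. Every pair is oriented, and since the
colors at `v` are distinct each vertex has out-degree at most one; so `k` common neighbours give
`k(k-1)/2 ≤ k`, i.e. `k ≤ 3`.
-/

open Finset

theorem Finset.card_le_three_of_forall_ne_eq_or_eq {α β : Type*} {s : Finset α}
    {a b : α → β} (hb : Set.InjOn b s)
    (h : ∀ x ∈ s, ∀ y ∈ s, x ≠ y → a x = b y ∨ a y = b x) : #s ≤ 3 := by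
  classical
  set P := s.offDiag.filter fun p => a p.1 = b p.2
  have hP : #P ≤ #s := by
    refine card_le_card_of_injOn Prod.fst (fun p hp => (mem_offDiag.1 (mem_filter.1 hp).1).1) ?_
    rintro ⟨x, y⟩ hp ⟨x', y'⟩ hp' (rfl : x = x')
    simp only [P, coe_filter, mem_offDiag, Set.mem_ofPred_eq] at hp hp'
    rw [hb hp.1.2.1 hp'.1.2.1 (hp.2.symm.trans hp'.2)]
  have hcover : s.offDiag ⊆ P ∪ P.image Prod.swap := by
    rintro ⟨x, y⟩ hxy
    obtain ⟨hx, hy, hne⟩ := mem_offDiag.1 hxy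
    rcases h x hx y hy hne with hxy' | hyx
    · exact mem_union_left _ (mem_filter.2 ⟨mem_offDiag.2 ⟨hx, hy, hne⟩, hxy'⟩)
    · refine mem_union_right _ (mem_image.2 ⟨(y, x), ?_, rfl⟩)
      exact mem_filter.2 ⟨mem_offDiag.2 ⟨hy, hx, hne.symm⟩, hyx⟩
  have hcard : #s * #s - #s ≤ 2 * #s := calc
    #s * #s - #s = #s.offDiag := (offDiag_card s).symm
    _ ≤ #P + #(P.image Prod.swap) := (card_le_card hcover).trans (card_union_le _ _)
    _ ≤ 2 * #s := by linarith [card_image_le (s := P) (f := Prod.swap)]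
  by_contra! hs
  have : 4 * #s ≤ #s * #s := Nat.mul_le_mul_right _ hs
  omega

theorem Set.ncard_le_three_of_forall_ne_eq_or_eq {α β : Type*} {s : Set α} {a b : α → β}
    (hb : Set.InjOn b s) (h : ∀ x ∈ s, ∀ y ∈ s, x ≠ y → a x = b y ∨ a y = b x) :
    s.ncard ≤ 3 := by
  rcases s.finite_or_infinite with hs | hs
  · lift s to Finset α using hs
    rw [ncard_coe_finset]
    exact Finset.card_le_three_of_forall_ne_eq_or_eq hb h
  · simp [hs.ncard]

theorem injective_vecCons_four {α : Type*} {a b c d : α} (hab : a ≠ b) (hac : a ≠ c)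
    (had : a ≠ d) (hbc : b ≠ c) (hbd : b ≠ d) (hcd : c ≠ d) :
    Function.Injective (![a, b, c, d] : ZMod 4 → α) := by
  intro i j
  fin_cases i <;> fin_cases j <;> simp_all [eq_comm]

namespace ProperEdgeColoring

variable {V : Type*} {G : SimpleGraph V} {c : Sym2 V → ℕ}

theorem color_ne (hc : ProperEdgeColoring G c) {a b d : V} (hab : G.Adj a b) (hbd : G.Adj b d)
    (had : a ≠ d) : c s(a, b) ≠ c s(b, d) :=
  hc _ hab _ hbd (by simp [had, hab.ne]) ⟨b, by simp, by simp⟩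

theorem injOn_neighborSet (hc : ProperEdgeColoring G c) (u : V) :
    Set.InjOn (fun x => c s(u, x)) (G.neighborSet u) := by
  intro x hx y hy hxy
  by_contra hne
  exact hc.color_ne (hx : G.Adj u x).symm hy hne (by rwa [Sym2.eq_swap])

theorem color_eq_or_color_eq (hc : ProperEdgeColoring G c) (hfree : ¬ HasRainbowCycle G c 4)
    {u v x y : V} (huv : u ≠ v) (hxy : x ≠ y)
    (hux : G.Adj u x) (hvx : G.Adj v x) (huy : G.Adj u y) (hvy : G.Adj v y) :
    c s(u, x) = c s(v, y) ∨ c s(u, y) = c s(v, x) := by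
  by_contra! ⟨h1, h2⟩
  have e1 := hc.color_ne hux hvx.symm huv
  have e2 := hc.color_ne hvx.symm hvy hxy
  have e3 := hc.color_ne hvy huy.symm huv.symm
  have e4 := hc.color_ne huy.symm hux hxy.symm
  refine hfree ⟨![u, x, v, y], ?_, ?_, ?_⟩
  · exact injective_vecCons_four hux.ne huv huy.ne hvx.ne.symm hxy hvy.ne
  · intro i; fin_cases i
    exacts [hux, hvx.symm, hvy, huy.symm]
  · have hcolors := injective_vecCons_four e1 h1 e4.symm e2
      (by rw [Sym2.eq_swap (a := x), Sym2.eq_swap (a := y)]; exact h2.symm) e3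
    intro i j hij
    exact hcolors (by fin_cases i <;> fin_cases j <;> exact hij)

end ProperEdgeColoring

theorem rainbow_sat_C4_common_nbrs_lt_four_general {V : Type*}
    (G : SimpleGraph V) (hG : RainbowSat G 4) :
    ∀ u v : V, u ≠ v → (G.neighborSet u ∩ G.neighborSet v).ncard < 4 := by
  obtain ⟨c, hc, hfree⟩ := hG.1
  intro u v huv
  refine Nat.lt_succ_of_le (Set.ncard_le_three_of_forall_ne_eq_or_eq (a := fun x => c s(u, x))
    ((hc.injOn_neighborSet v).mono Set.inter_subset_right) ?_)
  exact fun x hx y hy hxy => hc.color_eq_or_color_eq hfree huv hxy hx.1 hx.2 hy.1 hy.2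

/-- In a rainbow `C₄`-saturated graph, any two distinct vertices have fewer than
4 common neighbors. -/
theorem rainbow_sat_C4_common_nbrs_lt_four {V : Type*} [Fintype V]
    (G : SimpleGraph V) (hG : RainbowSat G 4) :
    ∀ u v : V, u ≠ v → (G.neighborSet u ∩ G.neighborSet v).ncard < 4 :=
  rainbow_sat_C4_common_nbrs_lt_four_general G hG
end

section
/- Let G be a graph that admits a proper edge-coloring under which G is rainbow C_4-free, and let v be a vertex of G. Then the neighborhood N(v) does not contain a triangle with pendant edges from two of its vertices; that is, there do not exist five distinct vertices v_1, v_2, v_3, v_4, v_5 ∈ N(v) such that v_1v_2, v_2v_3, v_1v_3, v_2v_4, v_3v_5 are all edges of G. -/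
/-!
In a proper edge-coloring without rainbow `C₄`, every 4-cycle has a pair of equally colored
opposite edges. Applied to the 4-cycles through `v` and a path of length two in `N(v)`, this
forces, for the triangle `v₁v₂v₃` with pendant edges `v₂v₄` and `v₃v₅`, first
`c(v₁v₂) = c(vv₃)` and `c(v₁v₃) = c(vv₂)`, and then `c(v₂v₃) = c(vv₄)` and `c(v₂v₃) = c(vv₅)`.
The last two contradict properness at `v`.
-/

theorem vec_four_injective {α : Type*} {a b c d : α} (hab : a ≠ b) (hac : a ≠ c) (had : a ≠ d)
    (hbc : b ≠ c) (hbd : b ≠ d) (hcd : c ≠ d) : Function.Injective ![a, b, c, d] := by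
  simp only [Matrix.vecCons, Fin.cons_injective_iff]
  simp [hab, hac, had, hbc, hbd, hcd, Function.Injective, eq_iff_true_of_subsingleton]

namespace ProperEdgeColoring

variable {V : Type*} {G : SimpleGraph V} {c : Sym2 V → ℕ}

theorem color_ne_s7 (hc : ProperEdgeColoring G c) {x y z : V} (hxy : G.Adj x y) (hxz : G.Adj x z)
    (hyz : y ≠ z) : c s(x, y) ≠ c s(x, z) :=
  hc _ hxy _ hxz (Sym2.congr_right.not.mpr hyz) ⟨x, Sym2.mem_mk_left x y, Sym2.mem_mk_left x z⟩

theorem hasRainbowCycle_four (hc : ProperEdgeColoring G c) {w₀ w₁ w₂ w₃ : V}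
    (h₀₁ : G.Adj w₀ w₁) (h₁₂ : G.Adj w₁ w₂) (h₂₃ : G.Adj w₂ w₃) (h₀₃ : G.Adj w₀ w₃)
    (hw₀₂ : w₀ ≠ w₂) (hw₁₃ : w₁ ≠ w₃) (hc₀₁₂₃ : c s(w₀, w₁) ≠ c s(w₂, w₃))
    (hc₁₂₀₃ : c s(w₁, w₂) ≠ c s(w₀, w₃)) : HasRainbowCycle G c 4 := by
  have hc₀₁₁₂ : c s(w₀, w₁) ≠ c s(w₁, w₂) := by
    rw [Sym2.eq_swap]; exact hc.color_ne_s7 h₀₁.symm h₁₂ hw₀₂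
  have hc₁₂₂₃ : c s(w₁, w₂) ≠ c s(w₂, w₃) := by
    rw [Sym2.eq_swap]; exact hc.color_ne_s7 h₁₂.symm h₂₃ hw₁₃
  have hc₂₃₀₃ : c s(w₂, w₃) ≠ c s(w₀, w₃) := by
    rw [Sym2.eq_swap, Sym2.eq_swap (a := w₀)]; exact hc.color_ne_s7 h₂₃.symm h₀₃.symm hw₀₂.symm
  have hc₀₁₀₃ : c s(w₀, w₁) ≠ c s(w₀, w₃) := hc.color_ne_s7 h₀₁ h₀₃ hw₁₃
  let f : ZMod 4 → V := ![w₀, w₁, w₂, w₃]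
  have hcolors : (fun i => c s(f i, f (i + 1))) =
      ![c s(w₀, w₁), c s(w₁, w₂), c s(w₂, w₃), c s(w₀, w₃)] := by
    funext i
    fin_cases i
    exacts [rfl, rfl, rfl, congrArg c Sym2.eq_swap]
  refine ⟨f, vec_four_injective h₀₁.ne hw₀₂ h₀₃.ne h₁₂.ne hw₁₃ h₂₃.ne, fun i => ?_,
    hcolors ▸ vec_four_injective hc₀₁₁₂ hc₀₁₂₃ hc₀₁₀₃ hc₁₂₂₃ hc₁₂₀₃ hc₂₃₀₃⟩
  fin_cases i
  exacts [h₀₁, h₁₂, h₂₃, h₀₃.symm]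

theorem opposite_color_eq_of_not_hasRainbowCycle (hc : ProperEdgeColoring G c)
    (hfree : ¬ HasRainbowCycle G c 4) {w₀ w₁ w₂ w₃ : V}
    (h₀₁ : G.Adj w₀ w₁) (h₁₂ : G.Adj w₁ w₂) (h₂₃ : G.Adj w₂ w₃) (h₀₃ : G.Adj w₀ w₃)
    (hw₀₂ : w₀ ≠ w₂) (hw₁₃ : w₁ ≠ w₃) :
    c s(w₀, w₁) = c s(w₂, w₃) ∨ c s(w₁, w₂) = c s(w₀, w₃) := by
  by_contra! h
  exact hfree (hc.hasRainbowCycle_four h₀₁ h₁₂ h₂₃ h₀₃ hw₀₂ hw₁₃ h.1 h.2)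

theorem color_eq_of_triangle_of_pendant (hc : ProperEdgeColoring G c)
    (hfree : ¬ HasRainbowCycle G c 4) {v x y z w : V}
    (hvx : G.Adj v x) (hvy : G.Adj v y) (hvz : G.Adj v z) (hvw : G.Adj v w)
    (hxy : G.Adj x y) (hyz : G.Adj y z) (hxz : G.Adj x z) (hzw : G.Adj z w)
    (hxw : x ≠ w) (hyw : y ≠ w) : c s(x, y) = c s(v, z) := by
  by_contra hne
  have hvx_yz := (hc.opposite_color_eq_of_not_hasRainbowCycle hfree hvx hxy hyz hvz hvy.ne
    hxz.ne).resolve_right hne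
  obtain hvx_zw | hxz_vw := hc.opposite_color_eq_of_not_hasRainbowCycle hfree hvx hxz hzw hvw
    hvz.ne hxw
  · rw [hvx_yz, Sym2.eq_swap] at hvx_zw
    exact absurd hvx_zw (hc.color_ne_s7 hyz.symm hzw hyw)
  obtain hvy_xz | hyx_vz := hc.opposite_color_eq_of_not_hasRainbowCycle hfree hvy hxy.symm hxz hvz
    hvx.ne hyz.ne
  · exact absurd (hvy_xz.trans hxz_vw) (hc.color_ne_s7 hvy hvw hyw)
  · exact hne (Sym2.eq_swap (a := y) ▸ hyx_vz)

theorem color_eq_of_common_neighbor (hc : ProperEdgeColoring G c)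
    (hfree : ¬ HasRainbowCycle G c 4) {v x y z w : V}
    (hvx : G.Adj v x) (hvy : v ≠ y) (hvz : G.Adj v z) (hvw : G.Adj v w)
    (hxy : G.Adj x y) (hyz : G.Adj y z) (hyw : G.Adj y w) (hxz : x ≠ z)
    (hxw : x ≠ w) (hzw : z ≠ w) (hxy_vz : c s(x, y) = c s(v, z)) : c s(y, z) = c s(v, w) := by
  obtain hvx_yw | hxy_vw := hc.opposite_color_eq_of_not_hasRainbowCycle hfree hvx hxy hyw hvw
    hvy hxw
  · obtain hvz_yw | hzy_vw := hc.opposite_color_eq_of_not_hasRainbowCycle hfree hvz hyz.symm hyw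
      hvw hvy hzw
    · exact absurd (hvx_yw.trans hvz_yw.symm) (hc.color_ne_s7 hvx hvz hxz)
    · rwa [Sym2.eq_swap] at hzy_vw
  · exact absurd (hxy_vz.symm.trans hxy_vw) (hc.color_ne_s7 hvz hvw hzw)

end ProperEdgeColoring

/-- If `G` admits a proper edge-coloring with no rainbow `C₄`-copy, then for any
vertex `v`, the neighborhood `N(v)` does not contain a triangle with pendant edges
from two of its vertices. -/
theorem no_triangle_with_two_pendants_in_nbhd {V : Type*} (G : SimpleGraph V)
    (c : Sym2 V → ℕ) (hc : ProperEdgeColoring G c) (hfree : ¬ HasRainbowCycle G c 4)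
    (v : V) :
    ¬ ∃ v₁ v₂ v₃ v₄ v₅ : V,
        v₁ ≠ v₂ ∧ v₁ ≠ v₃ ∧ v₁ ≠ v₄ ∧ v₁ ≠ v₅ ∧ v₂ ≠ v₃ ∧ v₂ ≠ v₄ ∧ v₂ ≠ v₅ ∧
        v₃ ≠ v₄ ∧ v₃ ≠ v₅ ∧ v₄ ≠ v₅ ∧
        G.Adj v v₁ ∧ G.Adj v v₂ ∧ G.Adj v v₃ ∧ G.Adj v v₄ ∧ G.Adj v v₅ ∧
        G.Adj v₁ v₂ ∧ G.Adj v₂ v₃ ∧ G.Adj v₁ v₃ ∧ G.Adj v₂ v₄ ∧ G.Adj v₃ v₅ := by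
  rintro ⟨v₁, v₂, v₃, v₄, v₅, -, -, h₁₄, h₁₅, -, -, h₂₅, h₃₄, -, h₄₅,
    hv₁, hv₂, hv₃, hv₄, hv₅, h₁₂, h₂₃, h₁₃, h₂₄, h₃₅⟩
  have h₁₂_v₃ : c s(v₁, v₂) = c s(v, v₃) := hc.color_eq_of_triangle_of_pendant hfree
    hv₁ hv₂ hv₃ hv₅ h₁₂ h₂₃ h₁₃ h₃₅ h₁₅ h₂₅
  have h₁₃_v₂ : c s(v₁, v₃) = c s(v, v₂) := hc.color_eq_of_triangle_of_pendant hfree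
    hv₁ hv₃ hv₂ hv₄ h₁₃ h₂₃.symm h₁₂ h₂₄ h₁₄ h₃₄
  have h₂₃_v₄ : c s(v₂, v₃) = c s(v, v₄) := hc.color_eq_of_common_neighbor hfree
    hv₁ hv₂.ne hv₃ hv₄ h₁₂ h₂₃ h₂₄ h₁₃.ne h₁₄ h₃₄ h₁₂_v₃
  have h₃₂_v₅ : c s(v₃, v₂) = c s(v, v₅) := hc.color_eq_of_common_neighbor hfree
    hv₁ hv₃.ne hv₂ hv₅ h₁₃ h₂₃.symm h₃₅ h₁₂.ne h₁₅ h₂₅ h₁₃_v₂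
  rw [Sym2.eq_swap] at h₃₂_v₅
  exact hc.color_ne_s7 hv₄ hv₅ h₄₅ (h₂₃_v₄.symm.trans h₃₂_v₅)
end

section
/- Fix a real number α with 0 < α < 1/9. There exists n_0 ∈ ℕ such that for any rainbow C_4-saturated graph G on n ≥ n_0 vertices, G contains a dominating set D such that either |D| ≤ α·n, or the induced subgraph G[D] has average degree at least 4 (i.e., 2·|E(G[D])| ≥ 4·|D|). -/
/-!
Giving the old edges the odd colours `2c + 1` and a new edge `xy` the colour `0` is always
proper, so saturation forces a rainbow `C₄` through `xy` whose other three edges lie in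
`G`: any two nonadjacent vertices are joined by a path of length 3. Hence
every ball of radius 2 is dominating. If some vertex and all its neighbours have degree at
most `K`, its ball has at most `1 + K + K²` vertices, which is `≤ αn` for large `n`.
Otherwise the vertices of degree `> K` dominate, and there are fewer than `4n / (K + 1) ≤ αn`
of them unless the average degree is at least 4, in which case `V` itself works.
-/

open Finset SimpleGraph

lemma ProperEdgeColoring.sup_edge {V : Type*} [DecidableEq V] {G : SimpleGraph V}
    {c : Sym2 V → ℕ} (hc : ProperEdgeColoring G c) (e₀ : Sym2 V) :
    ProperEdgeColoring (G ⊔ fromEdgeSet {e₀}) (fun e => if e = e₀ then 0 else 2 * c e + 1) := by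
  have hG : ∀ e ∈ (G ⊔ fromEdgeSet {e₀}).edgeSet, e ≠ e₀ → e ∈ G.edgeSet := by
    intro e he hne
    simpa [edgeSet_sup, hne] using he
  intro e₁ he₁ e₂ he₂ hne hv
  by_cases h₁ : e₁ = e₀ <;> by_cases h₂ : e₂ = e₀
  · exact absurd (h₁.trans h₂.symm) hne
  · simp [h₁, h₂]
  · simp [h₁, h₂]
  · simpa [h₁, h₂] using hc e₁ (hG e₁ he₁ h₁) e₂ (hG e₂ he₂ h₂) hne hv

section Saturation

variable {V : Type*} {G : SimpleGraph V}

lemma RainbowSat.exists_cycle_through {k : ℕ} (h : RainbowSat G k) {x y : V} (hxy : x ≠ y)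
    (hna : ¬G.Adj x y) :
    ∃ f : ZMod k → V, Function.Injective f ∧ s(f 0, f 1) = s(x, y) ∧
      ∀ i ≠ 0, G.Adj (f i) (f (i + 1)) := by
  classical
  obtain ⟨⟨c, hc, hnc⟩, hsat⟩ := h
  set c' : Sym2 V → ℕ := fun e => if e = s(x, y) then 0 else 2 * c e + 1
  obtain ⟨f, hf, hadj, hrainbow⟩ := hsat x y hxy hna c' (hc.sup_edge _)
  have hG : ∀ i, s(f i, f (i + 1)) ≠ s(x, y) → G.Adj (f i) (f (i + 1)) := fun i hi => by
    simpa [hi] using hadj i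
  by_cases hthrough : ∃ i₀, s(f i₀, f (i₀ + 1)) = s(x, y)
  · obtain ⟨i₀, hi₀⟩ := hthrough
    refine ⟨fun i => f (i + i₀), hf.comp (add_left_injective i₀), by simpa [add_comm] using hi₀,
      fun i hi => ?_⟩
    have hi' : s(f (i + i₀), f (i + i₀ + 1)) ≠ s(x, y) := fun he => by
      have := @hrainbow (i + i₀) i₀ (by simp only [c', he, hi₀])
      exact hi (by simpa using this)
    simpa [add_right_comm] using hG _ hi'
  · push Not at hthrough
    refine absurd ⟨f, hf, fun i => hG i (hthrough i), fun i j hij => hrainbow ?_⟩ hnc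
    simp only [c', if_neg (hthrough _)]
    exact congrArg (2 * · + 1) hij

lemma RainbowSat.exists_path_three (h : RainbowSat G 4) {x y : V} (hxy : x ≠ y)
    (hna : ¬G.Adj x y) : ∃ p q, G.Adj x p ∧ G.Adj p q ∧ G.Adj q y := by
  obtain ⟨f, -, hf, hG⟩ := h.exists_cycle_through hxy hna
  have h₁ : G.Adj (f 1) (f 2) := hG 1 (by decide)
  have h₂ : G.Adj (f 2) (f 3) := hG 2 (by decide)
  have h₃ : G.Adj (f 3) (f 0) := hG 3 (by decide)
  rcases Sym2.eq_iff.mp hf with ⟨rfl, rfl⟩ | ⟨rfl, rfl⟩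
  · exact ⟨f 3, f 2, h₃.symm, h₂.symm, h₁.symm⟩
  · exact ⟨f 2, f 3, h₁, h₂, h₃⟩

end Saturation

namespace SimpleGraph

variable {V : Type*} (G : SimpleGraph V)

def Dominates (D : Set V) : Prop :=
  ∀ v, v ∈ D ∨ ∃ u ∈ D, G.Adj u v

variable [Fintype V] [DecidableRel G.Adj]

lemma dominates_setOf_lt_degree {K : ℕ}
    (h : ∀ v, G.degree v ≤ K → ∃ u, G.Adj v u ∧ K < G.degree u) :
    G.Dominates {v | K < G.degree v} := by
  intro v
  by_cases hv : K < G.degree v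
  · exact Or.inl hv
  obtain ⟨u, hvu, hu⟩ := h v (not_lt.mp hv)
  exact Or.inr ⟨u, hu, hvu.symm⟩

lemma ncard_setOf_lt_degree_mul_le (K : ℕ) :
    {v | K < G.degree v}.ncard * (K + 1) ≤ ∑ v, G.degree v := by
  rw [← coe_filter_univ, Set.ncard_coe_finset, ← smul_eq_mul]
  exact (card_nsmul_le_sum _ _ _ fun v hv => (mem_filter.mp hv).2).trans
    (sum_le_sum_of_subset (filter_subset _ _))

lemma two_mul_ncard_edgeSet_induce_univ :
    2 * (G.induce Set.univ).edgeSet.ncard = ∑ v, G.degree v := by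
  rw [sum_degrees_eq_twice_card_edges, ← Set.ncard_coe_finset, coe_edgeFinset,
    ← Nat.card_coe_set_eq, ← Nat.card_coe_set_eq,
    Nat.card_congr (induceUnivIso G).mapEdgeSet]

variable [DecidableEq V]

def ballTwo (v : V) : Finset V :=
  insert v (G.neighborFinset v ∪ (G.neighborFinset v).biUnion fun u => G.neighborFinset u)

lemma dominates_ballTwo
    (hG : ∀ x y, x ≠ y → ¬G.Adj x y → ∃ p q, G.Adj x p ∧ G.Adj p q ∧ G.Adj q y) (v : V) :
    G.Dominates (G.ballTwo v) := by
  intro u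
  by_cases hu : u ∈ G.ballTwo v
  · exact Or.inl hu
  have huv : u ≠ v := by rintro rfl; simp [ballTwo] at hu
  have hna : ¬G.Adj u v := fun h => hu (by simp [ballTwo, h.symm])
  obtain ⟨p, q, hup, hpq, hqv⟩ := hG u v huv hna
  exact Or.inr ⟨p, by simpa [ballTwo] using Or.inr (Or.inr ⟨q, hqv.symm, hpq.symm⟩), hup.symm⟩

lemma card_ballTwo_le {K : ℕ} {v : V} (hv : G.degree v ≤ K)
    (hN : ∀ u, G.Adj v u → G.degree u ≤ K) : #(G.ballTwo v) ≤ 1 + K + K * K := by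
  have hbiUnion : #((G.neighborFinset v).biUnion fun u => G.neighborFinset u) ≤ K * K :=
    calc _ ≤ ∑ u ∈ G.neighborFinset v, #(G.neighborFinset u) := card_biUnion_le
      _ ≤ #(G.neighborFinset v) * K := sum_le_card_nsmul _ _ _ fun u hu => by
          simpa using hN u ((G.mem_neighborFinset v u).mp hu)
      _ ≤ K * K := Nat.mul_le_mul_right K (by simpa using hv)
  calc #(G.ballTwo v)
      ≤ 1 + #(G.neighborFinset v ∪ (G.neighborFinset v).biUnion fun u => G.neighborFinset u) := by
        rw [add_comm]; exact card_insert_le _ _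
    _ ≤ 1 + (K + K * K) := by
        gcongr
        exact (card_union_le _ _).trans (add_le_add (by simpa using hv) hbiUnion)
    _ = 1 + K + K * K := by ring

end SimpleGraph

theorem rainbow_sat_C4_dominating_set_general (α : ℝ) (hα0 : 0 < α) :
    ∃ n₀ : ℕ, ∀ n : ℕ, n₀ ≤ n → ∀ G : SimpleGraph (Fin n), RainbowSat G 4 →
      ∃ D : Set (Fin n), (∀ v, v ∈ D ∨ ∃ u ∈ D, G.Adj u v) ∧
        ((D.ncard : ℝ) ≤ α * n ∨ 4 * D.ncard ≤ 2 * (G.induce D).edgeSet.ncard) := by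
  classical
  obtain ⟨K, hK⟩ := exists_nat_gt (4 / α)
  refine ⟨⌈(1 + K + K * K : ℝ) / α⌉₊, fun n hn G hG => ?_⟩
  have hαK : 4 < α * K := by rwa [div_lt_iff₀ hα0, mul_comm] at hK
  have hαn : (1 + K + K * K : ℝ) ≤ α * n := by
    rw [← div_le_iff₀' hα0]
    exact Nat.ceil_le.mp hn
  by_cases hlow : ∃ v, G.degree v ≤ K ∧ ∀ u, G.Adj v u → G.degree u ≤ K
  · obtain ⟨v, hv, hvN⟩ := hlow
    refine ⟨G.ballTwo v, G.dominates_ballTwo (fun _ _ => hG.exists_path_three) v, Or.inl ?_⟩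
    rw [Set.ncard_coe_finset]
    exact le_trans (by exact_mod_cast G.card_ballTwo_le hv hvN) hαn
  push Not at hlow
  by_cases hdense : 4 * n ≤ ∑ v, G.degree v
  · refine ⟨Set.univ, fun v => Or.inl trivial, Or.inr ?_⟩
    simpa [G.two_mul_ncard_edgeSet_induce_univ] using hdense
  refine ⟨{v | K < G.degree v}, G.dominates_setOf_lt_degree hlow, Or.inl ?_⟩
  have hD : ({v | K < G.degree v}.ncard * (K + 1) : ℝ) < 4 * n := by
    exact_mod_cast (G.ncard_setOf_lt_degree_mul_le K).trans_lt (not_le.mp hdense)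
  nlinarith

/-- For any fixed `0 < α < 1/9` there exists `n₀` such that every rainbow
`C₄`-saturated graph on `n ≥ n₀` vertices contains a dominating set `D` with
either `|D| ≤ α·n` or the induced subgraph `G[D]` having average degree at
least 4. -/
theorem rainbow_sat_C4_dominating_set (α : ℝ) (hα0 : 0 < α) (hα1 : α < 1 / 9) :
    ∃ n₀ : ℕ, ∀ n : ℕ, n₀ ≤ n → ∀ G : SimpleGraph (Fin n), RainbowSat G 4 →
      ∃ D : Set (Fin n), (∀ v, v ∈ D ∨ ∃ u ∈ D, G.Adj u v) ∧
        ((D.ncard : ℝ) ≤ α * n ∨ 4 * D.ncard ≤ 2 * (G.induce D).edgeSet.ncard) :=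
  rainbow_sat_C4_dominating_set_general α hα0
end

section
/- Let ℓ ≥ 4 and n > 2. If G is an n-vertex rainbow C_ℓ-saturated graph, then G contains no acyclic connected component; that is, every connected component of G contains a cycle. -/
/-!
Extending a rainbow-free colouring of `G` by a fresh colour on a missing edge `xy`, the rainbow
`C_ℓ` that saturation forces in `G + xy` cannot lie in `G`, so it passes through `xy` and the rest
of it is an `x`–`y` path of length `ℓ - 1` in `G`. Hence `G` is connected, and an acyclic component
would make `G` a tree on at least three vertices. Such a tree has a vertex `z` with two neighbours
`x ≠ y`; these are nonadjacent and joined by the path `x z y` of length `2 < ℓ - 1`, contradicting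
the uniqueness of paths in a tree.
-/

namespace SimpleGraph

variable {V : Type*} {G : SimpleGraph V}

theorem exists_walk_support_eq_map_range {g : ℕ → V} :
    ∀ m : ℕ, (∀ k < m, G.Adj (g k) (g (k + 1))) →
      ∃ p : G.Walk (g 0) (g m), p.support = (List.range (m + 1)).map g
  | 0, _ => ⟨.nil, by simp⟩
  | m + 1, hadj => by
    obtain ⟨p, hp⟩ := exists_walk_support_eq_map_range m fun k hk => hadj k (by omega)
    refine ⟨p.concat (hadj m (by omega)), ?_⟩
    rw [Walk.support_concat, hp, List.range_succ (n := m + 1), List.map_append]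
    rfl

theorem exists_isPath_of_forall_adj_succ {g : ℕ → V} {m : ℕ}
    (hadj : ∀ k < m, G.Adj (g k) (g (k + 1))) (hg : Set.InjOn g (Set.Iio (m + 1))) :
    ∃ p : G.Walk (g 0) (g m), p.IsPath ∧ p.length = m := by
  obtain ⟨p, hp⟩ := exists_walk_support_eq_map_range m hadj
  refine ⟨p, ?_, ?_⟩
  · rw [Walk.isPath_def, hp]
    exact List.nodup_range.map_on fun a ha b hb => hg (by simpa using ha) (by simpa using hb)
  · have := congrArg List.length hp
    simp only [Walk.length_support, List.length_map, List.length_range] at this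
    omega

theorem exists_isPath_of_adj_add_one {ℓ : ℕ} [NeZero ℓ] {f : ZMod ℓ → V}
    (hf : Function.Injective f) (i : ZMod ℓ) (hadj : ∀ j ≠ i, G.Adj (f j) (f (j + 1))) :
    ∃ p : G.Walk (f (i + 1)) (f i), p.IsPath ∧ p.length = ℓ - 1 := by
  have hℓ : 0 < ℓ := Nat.pos_of_neZero ℓ
  have hcast {a b : ℕ} (ha : a < ℓ) (hb : b < ℓ) (hab : (a : ZMod ℓ) = b) : a = b := by
    rwa [ZMod.natCast_eq_natCast_iff', Nat.mod_eq_of_lt ha, Nat.mod_eq_of_lt hb] at hab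
  have hend : i + 1 + ((ℓ - 1 : ℕ) : ZMod ℓ) = i := by
    rw [Nat.cast_sub hℓ, ZMod.natCast_self]; ring
  have hstep (k : ℕ) (hk : k < ℓ - 1) : G.Adj (f (i + 1 + k)) (f (i + 1 + (k + 1 : ℕ))) := by
    have hne : i + 1 + k ≠ i := fun h => by
      have := hcast (a := k + 1) (b := 0) (by omega) hℓ (by push_cast; linear_combination h)
      omega
    simpa [add_assoc] using hadj _ hne
  obtain ⟨p, hp, hlen⟩ := exists_isPath_of_forall_adj_succ (g := fun k : ℕ => f (i + 1 + k)) hstep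
    fun a ha b hb hab => hcast (by simp_all; omega) (by simp_all; omega) (add_left_cancel (hf hab))
  exact ⟨p.copy (by simp) (congrArg f hend), by simpa using hp, by simpa using hlen⟩

theorem eq_or_adj_of_reachable (hG : ∀ ⦃z x y⦄, G.Adj z x → G.Adj z y → x = y) {a b : V}
    (h : G.Reachable a b) : a = b ∨ G.Adj a b := by
  obtain ⟨p⟩ := h
  induction p with
  | nil => exact .inl rfl
  | cons hab _ ih =>
    rcases ih with rfl | h
    · exact .inr hab
    · exact .inl (hG hab.symm h)

end SimpleGraph

open SimpleGraph

variable {V : Type*} {G : SimpleGraph V}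

theorem ProperEdgeColoring.sup_fromEdgeSet [DecidableEq V] {c : Sym2 V → ℕ}
    (hc : ProperEdgeColoring G c) (e : Sym2 V) :
    ProperEdgeColoring (G ⊔ fromEdgeSet {e}) (fun e' => if e' = e then 0 else c e' + 1) := by
  intro e₁ he₁ e₂ he₂ hne hshare
  have hG {e'} (he' : e' ∈ (G ⊔ fromEdgeSet {e}).edgeSet) (h : e' ≠ e) : e' ∈ G.edgeSet := by
    simpa [h] using he'
  by_cases h₁ : e₁ = e <;> by_cases h₂ : e₂ = e <;> simp only [h₁, h₂, if_true, if_false]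
  · exact absurd (h₁.trans h₂.symm) hne
  · omega
  · omega
  · exact fun h => hc e₁ (hG he₁ h₁) e₂ (hG he₂ h₂) hne hshare (by omega)

namespace RainbowSat

variable {ℓ : ℕ} [NeZero ℓ]

theorem exists_isPath_of_not_adj (hG : RainbowSat G ℓ) {x y : V} (hxy : x ≠ y)
    (hadj : ¬ G.Adj x y) : ∃ p : G.Walk x y, p.IsPath ∧ p.length = ℓ - 1 := by
  classical
  obtain ⟨⟨c, hc, hfree⟩, hsat⟩ := hG
  obtain ⟨f, hf, hfadj, hrainbow⟩ := hsat x y hxy hadj _ (hc.sup_fromEdgeSet s(x, y))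
  have hH {a b} (h : (G ⊔ fromEdgeSet {s(x, y)}).Adj a b) : G.Adj a b ∨ s(a, b) = s(x, y) := by
    simp only [sup_adj, fromEdgeSet_adj, Set.mem_singleton_iff] at h
    tauto
  rcases em (∃ i, s(f i, f (i + 1)) = s(x, y)) with ⟨i, hi⟩ | hnew
  · -- the colour `0` of `xy` occurs only once on a rainbow cycle
    have hinG (j) (hj : j ≠ i) : G.Adj (f j) (f (j + 1)) :=
      (hH (hfadj j)).resolve_right fun h => hj (hrainbow (by simp only [h, hi]))
    obtain ⟨p, hp, hlen⟩ := exists_isPath_of_adj_add_one hf i hinG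
    rcases Sym2.eq_iff.mp hi with ⟨h₁, h₂⟩ | ⟨h₁, h₂⟩
    · exact ⟨(p.copy h₂ h₁).reverse, by simpa using hp, by simpa using hlen⟩
    · exact ⟨p.copy h₂ h₁, by simpa using hp, by simpa using hlen⟩
  · have hne (i) : s(f i, f (i + 1)) ≠ s(x, y) := fun h => hnew ⟨i, h⟩
    refine (hfree ⟨f, hf, fun i => (hH (hfadj i)).resolve_right (hne i), fun i j hij => ?_⟩).elim
    refine hrainbow ?_
    simp only [if_neg (hne i), if_neg (hne j)]
    simpa using hij

theorem preconnected (hG : RainbowSat G ℓ) : G.Preconnected := by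
  intro x y
  by_cases hxy : x = y
  · exact hxy ▸ .refl x
  by_cases hadj : G.Adj x y
  · exact hadj.reachable
  obtain ⟨p, -⟩ := hG.exists_isPath_of_not_adj hxy hadj
  exact p.reachable

theorem eq_of_adj_of_adj_of_isAcyclic (hG : RainbowSat G ℓ) (hℓ : 4 ≤ ℓ) (hacyc : G.IsAcyclic)
    ⦃z x y : V⦄ (hzx : G.Adj z x) (hzy : G.Adj z y) : x = y := by
  by_contra hxy
  let q : G.Path x y := ⟨.cons hzx.symm (.cons hzy .nil), by simp [hzx.ne', hzy.ne, hxy]⟩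
  have hnadj : ¬ G.Adj x y := fun h => by
    simpa [q] using congrArg (·.1.length) ((hacyc.subsingleton_path x y).elim (.singleton h) q)
  obtain ⟨p, hp, hlen⟩ := hG.exists_isPath_of_not_adj hxy hnadj
  have := congrArg (·.1.length) ((hacyc.subsingleton_path x y).elim ⟨p, hp⟩ q)
  simp [q, hlen] at this
  omega

end RainbowSat

/-- For `ℓ ≥ 4` and `n > 2`, an `n`-vertex rainbow `C_ℓ`-saturated graph has no
acyclic connected component: every connected component contains a cycle. -/
theorem rainbow_sat_no_acyclic_component (ℓ n : ℕ) (hℓ : 4 ≤ ℓ) (hn : 2 < n)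
    (G : SimpleGraph (Fin n)) (hG : RainbowSat G ℓ) :
    ∀ v : Fin n, ∃ (u : Fin n) (p : G.Walk u u), p.IsCycle ∧ G.Reachable v u := by
  have : NeZero ℓ := ⟨by omega⟩
  intro v
  by_contra! hv
  have hpre := hG.preconnected
  have hacyc : G.IsAcyclic := fun u p hp => hv u p hp (hpre v u)
  have hdeg := hG.eq_of_adj_of_adj_of_isAcyclic hℓ hacyc
  obtain ⟨a, b, c, hab, hac, hbc⟩ := Fintype.two_lt_card_iff.mp (by rwa [Fintype.card_fin])
  have hb := (eq_or_adj_of_reachable hdeg (hpre a b)).resolve_left hab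
  have hc := (eq_or_adj_of_reachable hdeg (hpre a c)).resolve_left hac
  exact hbc (hdeg hb hc)
end

section
/- Let ℓ ≥ 4 and n > 2. Every n-vertex rainbow C_ℓ-saturated graph has at least n edges; consequently sat*(n, C_ℓ) ≥ n. -/
/-!
A rainbow `C_ℓ`-saturated graph `G` is connected: otherwise join two components by an edge of a
fresh color; a cycle through that edge would give a path between the components, and a cycle
avoiding it would already be a rainbow cycle of `G`. Nor is `G` a tree: for a path `v - u - w`
of a tree on at least three vertices, give `G + vw` an injective coloring; the `ℓ`-cycle it must
contain is not a cycle of the tree, so it runs through `vw` and yields a second `v`-`w` path in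
the tree, of length `ℓ - 1 ≥ 3`. A connected graph that is not a tree has at least as many edges
as vertices.
-/

namespace SimpleGraph

variable {V : Type*} {G : SimpleGraph V}

theorem exists_isPath_of_injective_of_adj_add_one {ℓ : ℕ} [NeZero ℓ] {g : ZMod ℓ → V}
    (hg : Function.Injective g) (hadj : ∀ i ≠ 0, G.Adj (g i) (g (i + 1))) :
    ∃ p : G.Walk (g 1) (g 0), p.IsPath ∧ p.length = ℓ - 1 := by
  have hℓ : ℓ ≠ 0 := NeZero.ne ℓ
  -- the support `g 1, g 2, …, g ℓ = g 0`, indexed by natural numbers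
  set L := (List.range' 1 ℓ).map (fun k : ℕ => g k)
  have hne : L ≠ [] := by simp [L, hℓ]
  have hchain : L.IsChain G.Adj := by
    refine List.isChain_map _ |>.mpr <|
      (List.isChain_range' 1 ℓ 1).imp_of_mem_imp fun a b ha hb hab => ?_
    rw [List.mem_range'_1] at ha hb
    have ha0 : (a : ZMod ℓ) ≠ 0 := by
      rw [Ne, ZMod.natCast_eq_zero_iff]
      exact Nat.not_dvd_of_pos_of_lt (by omega) (by omega)
    simpa [hab] using hadj a ha0
  have hhead : L.head hne = g 1 := by simp [L, List.head_map]
  have hlast : L.getLast hne = g 0 := by simp [L, List.getLast_map]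
  refine ⟨(Walk.ofSupport L hne hchain).copy hhead hlast, ?_, by simp [L]⟩
  rw [Walk.isPath_copy, Walk.isPath_def, Walk.support_ofSupport]
  refine (List.nodup_range' 1).map_on fun a ha b hb hab => ?_
  rw [List.mem_range'_1] at ha hb
  have hmod := (ZMod.natCast_eq_natCast_iff' a b ℓ).mp (hg hab)
  rcases (show a ≤ ℓ by omega).eq_or_lt with ha' | ha' <;>
    rcases (show b ≤ ℓ by omega).eq_or_lt with hb' | hb' <;>
    simp only [ha', hb', Nat.mod_self, Nat.mod_eq_of_lt] at hmod <;> omega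

theorem mem_edgeSet_of_mem_edgeSet_sup_fromEdgeSet {e f : Sym2 V}
    (he : e ∈ (G ⊔ fromEdgeSet {f}).edgeSet) (hne : e ≠ f) : e ∈ G.edgeSet := by
  simp_all

theorem IsAcyclic.length_eq_of_isPath (hG : G.IsAcyclic) {u v : V} {p q : G.Walk u v}
    (hp : p.IsPath) (hq : q.IsPath) : p.length = q.length :=
  congrArg (fun r : G.Path u v => r.1.length) <|
    (hG.subsingleton_path u v).elim ⟨p, hp⟩ ⟨q, hq⟩

theorem exists_isPath_length_two {u v w : V} (hvu : G.Adj v u) (huw : G.Adj u w) (hvw : v ≠ w) :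
    ∃ p : G.Walk v w, p.IsPath ∧ p.length = 2 :=
  ⟨.cons hvu (.cons huw .nil), by simp [Walk.isPath_def, hvu.ne, huw.ne, hvw], rfl⟩

theorem IsAcyclic.not_adj_of_adj_of_adj (hG : G.IsAcyclic) {u v w : V} (hvu : G.Adj v u)
    (huw : G.Adj u w) (hvw : v ≠ w) : ¬G.Adj v w := fun h => by
  obtain ⟨p, hp, hlen⟩ := exists_isPath_length_two hvu huw hvw
  have := hG.length_eq_of_isPath hp (Path.singleton h).isPath
  simp_all

theorem Connected.exists_adj_adj_not_adj (hG : G.Connected) {x y : V} (hxy : x ≠ y)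
    (hnadj : ¬G.Adj x y) : ∃ v u w, G.Adj v u ∧ G.Adj u w ∧ ¬G.Adj v w ∧ v ≠ w := by
  obtain ⟨p, hp⟩ := hG.exists_walk_length_eq_dist x y
  exact p.exists_adj_adj_not_adj_ne hp ((hG x y).one_lt_dist_of_ne_of_not_adj hxy hnadj)

theorem IsTree.exists_adj_adj_not_adj [Fintype V] (hG : G.IsTree) (hV : 2 < Fintype.card V) :
    ∃ v u w, G.Adj v u ∧ G.Adj u w ∧ ¬G.Adj v w ∧ v ≠ w := by
  obtain ⟨a, b, c, hab, hac, hbc⟩ := Fintype.two_lt_card_iff.mp hV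
  by_cases hab' : G.Adj a b
  · by_cases hbc' : G.Adj b c
    · exact ⟨a, b, c, hab', hbc', hG.isAcyclic.not_adj_of_adj_of_adj hab' hbc' hac, hac⟩
    · exact hG.connected.exists_adj_adj_not_adj hbc hbc'
  · exact hG.connected.exists_adj_adj_not_adj hab hab'

theorem Connected.card_le_ncard_edgeSet_of_not_isTree [Finite V] (hG : G.Connected)
    (hT : ¬G.IsTree) : Nat.card V ≤ G.edgeSet.ncard := by
  have hle := hG.card_vert_le_card_edgeSet_add_one
  have hne : Nat.card G.edgeSet + 1 ≠ Nat.card V := fun h =>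
    hT (isTree_iff_connected_and_card.mpr ⟨hG, h⟩)
  rw [Nat.card_coe_set_eq] at hle hne
  omega

end SimpleGraph

section RainbowCycles

open SimpleGraph

variable {V : Type*} {G : SimpleGraph V}

theorem ProperEdgeColoring.of_injective {c : Sym2 V → ℕ} (hc : Function.Injective c) :
    ProperEdgeColoring G c :=
  fun _ _ _ _ hne _ h => hne (hc h)

theorem ProperEdgeColoring.sup_fromEdgeSet_update [DecidableEq V] {c : Sym2 V → ℕ}
    (hc : ProperEdgeColoring G c) {x y : V} {N : ℕ} (hN : ∀ e ∈ G.edgeSet, c e ≠ N) :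
    ProperEdgeColoring (G ⊔ fromEdgeSet {s(x, y)}) (Function.update c s(x, y) N) := by
  intro e₁ he₁ e₂ he₂ hne hshare
  by_cases h₁ : e₁ = s(x, y) <;> by_cases h₂ : e₂ = s(x, y)
  · exact absurd (h₁.trans h₂.symm) hne
  · rw [Function.update_of_ne h₂, h₁, Function.update_self]
    exact (hN e₂ (mem_edgeSet_of_mem_edgeSet_sup_fromEdgeSet he₂ h₂)).symm
  · rw [Function.update_of_ne h₁, h₂, Function.update_self]
    exact hN e₁ (mem_edgeSet_of_mem_edgeSet_sup_fromEdgeSet he₁ h₁)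
  · rw [Function.update_of_ne h₁, Function.update_of_ne h₂]
    exact hc e₁ (mem_edgeSet_of_mem_edgeSet_sup_fromEdgeSet he₁ h₁)
      e₂ (mem_edgeSet_of_mem_edgeSet_sup_fromEdgeSet he₂ h₂) hne hshare

theorem HasRainbowCycle.congr_coloring {c c' : Sym2 V → ℕ} {k : ℕ} (h : HasRainbowCycle G c k)
    (hcc : ∀ e ∈ G.edgeSet, c e = c' e) : HasRainbowCycle G c' k := by
  obtain ⟨f, hf, hadj, hrb⟩ := h
  refine ⟨f, hf, hadj, ?_⟩
  convert hrb using 2 with i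
  exact (hcc _ (hadj i)).symm

theorem HasRainbowCycle.not_isAcyclic {c : Sym2 V → ℕ} {ℓ : ℕ} (hℓ : 3 ≤ ℓ)
    (h : HasRainbowCycle G c ℓ) : ¬G.IsAcyclic := fun hG => by
  obtain ⟨f, hf, hadj, -⟩ := h
  have : NeZero ℓ := ⟨by omega⟩
  obtain ⟨p, hp, hlen⟩ := exists_isPath_of_injective_of_adj_add_one hf fun i _ => hadj i
  have hedge : G.Adj (f 1) (f 0) := by simpa using (hadj 0).symm
  have := hG.length_eq_of_isPath hp (Path.singleton hedge).isPath
  simp only [Path.singleton, Walk.length_cons, Walk.length_nil] at this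
  omega

theorem HasRainbowCycle.of_sup_fromEdgeSet {c : Sym2 V → ℕ} {ℓ : ℕ} {x y : V}
    (hℓ : 3 ≤ ℓ) (h : HasRainbowCycle (G ⊔ fromEdgeSet {s(x, y)}) c ℓ) :
    HasRainbowCycle G c ℓ ∨ ∃ p : G.Walk x y, p.IsPath ∧ p.length = ℓ - 1 := by
  obtain ⟨f, hf, hadj, hrb⟩ := h
  by_cases hxy : ∀ i, s(f i, f (i + 1)) ≠ s(x, y)
  · exact .inl
      ⟨f, hf, fun i => mem_edgeSet_of_mem_edgeSet_sup_fromEdgeSet (hadj i) (hxy i), hrb⟩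
  obtain ⟨i₀, hi₀⟩ := not_forall_not.mp hxy
  have : NeZero ℓ := ⟨by omega⟩
  have htwo : (2 : ZMod ℓ) ≠ 0 := by
    have : ((2 : ℕ) : ZMod ℓ) ≠ 0 := by
      rw [Ne, ZMod.natCast_eq_zero_iff]
      exact Nat.not_dvd_of_pos_of_lt two_pos hℓ
    exact_mod_cast this
  -- rotate the cycle so that the new edge sits at index `0`
  have hg : Function.Injective (fun j => f (i₀ + j)) := hf.comp (add_right_injective i₀)
  obtain ⟨p, hp, hlen⟩ :=
      exists_isPath_of_injective_of_adj_add_one (G := G) hg fun j hj => by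
    show G.Adj (f (i₀ + j)) (f (i₀ + (j + 1)))
    rw [← add_assoc]
    refine mem_edgeSet_of_mem_edgeSet_sup_fromEdgeSet (e := s(_, _)) (hadj (i₀ + j))
      fun hj' => ?_
    rw [← hi₀, Sym2.eq_iff] at hj'
    rcases hj' with ⟨h₁, -⟩ | ⟨h₁, h₂⟩
    · exact hj (by simpa using hf h₁)
    · have hj₁ : j = 1 := add_left_cancel (hf h₁)
      have hj₂ : j + 1 = 0 := by simpa [add_assoc] using hf h₂
      exact htwo (by rw [← one_add_one_eq_two, ← hj₂, hj₁])
  rcases Sym2.eq_iff.mp hi₀ with ⟨rfl, rfl⟩ | ⟨rfl, rfl⟩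
  · exact .inr ⟨p.reverse.copy (by rw [add_zero]) rfl, by simpa using hp, by simpa using hlen⟩
  · exact .inr ⟨p.copy rfl (by rw [add_zero]), by simpa using hp, by simpa using hlen⟩

theorem RainbowSat.connected [Finite V] [Nonempty V] {ℓ : ℕ} (hℓ : 3 ≤ ℓ)
    (h : RainbowSat G ℓ) : G.Connected := by
  classical
  obtain ⟨⟨c, hc, hnc⟩, hsat⟩ := h
  refine ⟨fun x y => ?_⟩
  by_contra hreach
  have hnadj : ¬G.Adj x y := fun h => hreach h.reachable
  obtain ⟨N, hN⟩ := (Set.toFinite (c '' G.edgeSet)).exists_notMem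
  have hcN : ∀ e ∈ G.edgeSet, c e ≠ N := fun e he hce => hN ⟨e, he, hce⟩
  have hne : x ≠ y := fun h => hreach (h ▸ .refl x)
  rcases (hsat x y hne hnadj _ (hc.sup_fromEdgeSet_update hcN)).of_sup_fromEdgeSet hℓ
    with hrb | ⟨p, -⟩
  · refine hnc (hrb.congr_coloring fun e he => Function.update_of_ne ?_ _ _)
    rintro rfl
    exact hnadj he
  · exact hreach p.reachable

theorem RainbowSat.not_isTree [Fintype V] {ℓ : ℕ} (hℓ : 4 ≤ ℓ) (hV : 2 < Fintype.card V)
    (h : RainbowSat G ℓ) : ¬G.IsTree := fun hT => by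
  obtain ⟨v, u, w, hvu, huw, hvw, hne⟩ := hT.exists_adj_adj_not_adj hV
  obtain ⟨c, hc⟩ := exists_injective_nat (Sym2 V)
  rcases (h.2 v w hne hvw c (.of_injective hc)).of_sup_fromEdgeSet (by omega)
    with hrb | ⟨p, hp, hlen⟩
  · exact hrb.not_isAcyclic (by omega) hT.isAcyclic
  · obtain ⟨q, hq, hqlen⟩ := exists_isPath_length_two hvu huw hne
    have := hT.isAcyclic.length_eq_of_isPath hp hq
    omega

end RainbowCycles

/-- For `ℓ ≥ 4` and `n > 2`, every `n`-vertex rainbow `C_ℓ`-saturated graph has at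
least `n` edges; consequently `sat*(n, C_ℓ) ≥ n`. -/
theorem rainbow_sat_cycle_lower (ℓ n : ℕ) (hℓ : 4 ≤ ℓ) (hn : 2 < n)
    (G : SimpleGraph (Fin n)) (hG : RainbowSat G ℓ) :
    n ≤ G.edgeSet.ncard := by
  have : Nonempty (Fin n) := ⟨⟨0, by omega⟩⟩
  have hconn := hG.connected (by omega)
  have hT := hG.not_isTree hℓ (by simpa using hn)
  simpa using hconn.card_le_ncard_edgeSet_of_not_isTree hT
end

section
/- Let G be a graph on n ≥ 9 vertices containing two distinct vertices u and v each adjacent to every other vertex of G, and let c be a proper edge-coloring of G. If G contains a rainbow path on 4 vertices with endpoints u and v (i.e., distinct vertices x, y with edges ux, xy, yv whose colors c(ux), c(xy), c(yv) are pairwise distinct), then G contains a rainbow 5-cycle under c. -/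
/-! Close the path `u x y v` into the cycle `u x y v w u` through a fifth vertex `w`. Properness
alone makes `c(vw) ≠ c(yv)`, `c(wu) ≠ c(ux)` and `c(vw) ≠ c(wu)`; what remains is to keep
`c(vw)` off the two colors `c(ux), c(xy)` and `c(uw)` off `c(xy), c(yv)`. Each color occurs at
most once at `u` and once at `v`, so at most four of the at least five vertices outside
`{u, v, x, y}` fail, and some `w` works. -/

open Finset

namespace ProperEdgeColoring

variable {V : Type*} {G : SimpleGraph V} {c : Sym2 V → ℕ}

theorem color_ne_s14 (hc : ProperEdgeColoring G c) {a w₁ w₂ : V}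
    (h₁ : G.Adj a w₁) (h₂ : G.Adj a w₂) (hw : w₁ ≠ w₂) :
    c s(a, w₁) ≠ c s(a, w₂) :=
  hc _ h₁ _ h₂ (by rwa [Ne, Sym2.congr_right]) ⟨a, Sym2.mem_mk_left _ _, Sym2.mem_mk_left _ _⟩

theorem card_filter_color_mem_le (hc : ProperEdgeColoring G c) {a : V} {S : Finset V}
    (hS : ∀ w ∈ S, G.Adj a w) (A : Finset ℕ) :
    #{w ∈ S | c s(a, w) ∈ A} ≤ #A := by
  refine card_le_card_of_injOn (fun w => c s(a, w)) (fun w hw => (mem_filter.1 hw).2) ?_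
  intro w₁ hw₁ w₂ hw₂ heq
  by_contra hne
  exact hc.color_ne_s14 (hS w₁ (mem_filter.1 hw₁).1) (hS w₂ (mem_filter.1 hw₂).1) hne heq

theorem exists_color_not_mem (hc : ProperEdgeColoring G c) {u v : V} {S : Finset V}
    (hSu : ∀ w ∈ S, G.Adj u w) (hSv : ∀ w ∈ S, G.Adj v w) (A B : Finset ℕ)
    (hS : #A + #B < #S) : ∃ w ∈ S, c s(u, w) ∉ A ∧ c s(v, w) ∉ B := by
  classical
  have hbad : #{w ∈ S | c s(u, w) ∈ A ∨ c s(v, w) ∈ B} < #S := calc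
    _ ≤ #{w ∈ S | c s(u, w) ∈ A} + #{w ∈ S | c s(v, w) ∈ B} := by
      rw [filter_or]; exact card_union_le _ _
    _ ≤ #A + #B :=
      add_le_add (hc.card_filter_color_mem_le hSu A) (hc.card_filter_color_mem_le hSv B)
    _ < #S := hS
  obtain ⟨w, hwS, hw⟩ := exists_mem_notMem_of_card_lt_card hbad
  exact ⟨w, hwS, by simpa [hwS, not_or] using hw⟩

end ProperEdgeColoring

theorem hasRainbowCycle_five {V : Type*} {G : SimpleGraph V} {c : Sym2 V → ℕ}
    {a b d e f : V} (hV : [a, b, d, e, f].Nodup)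
    (hab : G.Adj a b) (hbd : G.Adj b d) (hde : G.Adj d e) (hef : G.Adj e f) (hfa : G.Adj f a)
    (hcol : [c s(a, b), c s(b, d), c s(d, e), c s(e, f), c s(f, a)].Nodup) :
    HasRainbowCycle G c 5 := by
  refine ⟨![a, b, d, e, f], List.nodup_ofFn.1 hV, ?_, List.nodup_ofFn.1 hcol⟩
  intro i
  fin_cases i
  exacts [hab, hbd, hde, hef, hfa]

/-- Let `G` have at least 9 vertices with two distinct vertices `u, v` adjacent to
every other vertex, and let `c` be a proper edge-coloring of `G`. If `G` contains a
rainbow path on 4 vertices with endpoints `u` and `v`, then `G` contains a rainbow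
5-cycle under `c`. -/
theorem rainbow_P4_gives_rainbow_C5 {V : Type*} [Fintype V]
    (hcard : 9 ≤ Fintype.card V) (G : SimpleGraph V) (u v : V) (huv : u ≠ v)
    (hu : ∀ w, w ≠ u → G.Adj u w) (hv : ∀ w, w ≠ v → G.Adj v w)
    (c : Sym2 V → ℕ) (hc : ProperEdgeColoring G c)
    (x y : V) (hxy : x ≠ y) (hxu : x ≠ u) (hxv : x ≠ v) (hyu : y ≠ u) (hyv : y ≠ v)
    (hux : G.Adj u x) (hxy' : G.Adj x y) (hyv' : G.Adj y v)
    (h₁ : c s(u, x) ≠ c s(x, y)) (h₂ : c s(u, x) ≠ c s(y, v))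
    (h₃ : c s(x, y) ≠ c s(y, v)) :
    HasRainbowCycle G c 5 := by
  classical
  set S : Finset V := univ \ {u, v, x, y}
  have hS : ∀ w ∈ S, w ≠ u ∧ w ≠ v ∧ w ≠ x ∧ w ≠ y := by simp [S]
  have hScard : 4 < #S := calc
    4 < Fintype.card V - #{u, v, x, y} := by
      have := card_le_four (a := u) (b := v) (c := x) (d := y)
      omega
    _ ≤ #S := by rw [← card_univ]; exact le_card_sdiff _ _
  obtain ⟨w, hwS, huw_col, hvw_col⟩ := hc.exists_color_not_mem (fun w hw => hu w (hS w hw).1)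
    (fun w hw => hv w (hS w hw).2.1) {c s(x, y), c s(y, v)} {c s(u, x), c s(x, y)}
    (by grw [card_le_two, card_le_two]; exact hScard)
  obtain ⟨hwu, hwv, hwx, hwy⟩ := hS w hwS
  have hvw_yv : c s(v, w) ≠ c s(y, v) := by
    simpa [Sym2.eq_swap] using hc.color_ne_s14 (hv w hwv) (hv y hyv) hwy
  have huw_ux : c s(u, w) ≠ c s(u, x) := hc.color_ne_s14 (hu w hwu) hux hwx
  have hvw_uw : c s(v, w) ≠ c s(u, w) := by
    simpa [Sym2.eq_swap] using hc.color_ne_s14 (hv w hwv).symm (hu w hwu).symm huv.symm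
  refine hasRainbowCycle_five (a := u) (b := x) (d := y) (e := v) (f := w) ?_ hux hxy' hyv'
    (hv w hwv) (hu w hwu).symm ?_
  · simp_all [eq_comm]
  · simp_all [Sym2.eq_swap, eq_comm]
end

section
/- Let n ≥ 9 and let G(n,C_5) be the graph on vertex set {u, v} ∪ W with |W| = n − 2, whose edges are uv, all edges from u and from v to every vertex of W, and a maximum matching on W (a set of ⌊(n−2)/2⌋ pairwise disjoint edges inside W). Then for every pair of nonadjacent vertices a, b of G(n,C_5), every proper edge-coloring of G(n,C_5) + ab contains a rainbow path on 4 vertices with endpoints u and v (three edges with pairwise distinct colors). -/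
/-- The graph `G(n, C₅)`: two universal vertices `0` and `1`, together with a
maximum matching on the remaining `n - 2` vertices (vertex `i ≥ 2` is matched to
the other vertex `j ≥ 2` with `i / 2 = j / 2`, i.e. the pairs `(2k, 2k+1)`,
giving `⌊(n-2)/2⌋` matching edges). -/
def GnC5 (n : ℕ) : SimpleGraph (Fin n) :=
  SimpleGraph.fromRel (fun i j => i.val ≤ 1 ∨ j.val ≤ 1 ∨ i.val / 2 = j.val / 2)

open SimpleGraph

section RainbowPath

variable {V : Type*}

def IsRainbowP4 (G : SimpleGraph V) (c : Sym2 V → ℕ) (u x y v : V) : Prop :=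
  x ≠ y ∧ x ≠ u ∧ x ≠ v ∧ y ≠ u ∧ y ≠ v ∧ G.Adj u x ∧ G.Adj x y ∧ G.Adj y v ∧
    c s(u, x) ≠ c s(x, y) ∧ c s(u, x) ≠ c s(y, v) ∧ c s(x, y) ≠ c s(y, v)

variable {G : SimpleGraph V} {c : Sym2 V → ℕ}

theorem ProperEdgeColoring.ne_of_adj_of_adj (hc : ProperEdgeColoring G c) {x y z : V}
    (hxy : G.Adj x y) (hyz : G.Adj y z) (hxz : x ≠ z) : c s(x, y) ≠ c s(y, z) :=
  hc _ hxy _ hyz (by simp [hxy.ne, hxz]) ⟨y, Sym2.mem_mk_right x y, Sym2.mem_mk_left y z⟩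

theorem isRainbowP4_of_color_ne (hc : ProperEdgeColoring G c) {u x y v : V}
    (hux : G.Adj u x) (hxy : G.Adj x y) (hyv : G.Adj y v) (huy : u ≠ y) (hxv : x ≠ v)
    (hcol : c s(u, x) ≠ c s(y, v)) : IsRainbowP4 G c u x y v :=
  ⟨hxy.ne, hux.ne.symm, hxv, huy.symm, hyv.ne, hux, hxy, hyv,
    hc.ne_of_adj_of_adj hux hxy huy, hcol, hc.ne_of_adj_of_adj hxy hyv hxv⟩

end RainbowPath

namespace GnC5

variable {n : ℕ} {i j : Fin n}

theorem adj_iff : (GnC5 n).Adj i j ↔ i ≠ j ∧ (i.val ≤ 1 ∨ j.val ≤ 1 ∨ i.val / 2 = j.val / 2) := by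
  rw [GnC5, fromRel_adj]
  constructor <;> rintro ⟨hij, h⟩ <;> refine ⟨hij, ?_⟩ <;> omega

theorem adj_of_val_le_one (hi : i.val ≤ 1) (hij : i ≠ j) : (GnC5 n).Adj i j :=
  adj_iff.mpr ⟨hij, Or.inl hi⟩

theorem adj_of_div_two_eq (hij : i ≠ j) (h : i.val / 2 = j.val / 2) : (GnC5 n).Adj i j :=
  adj_iff.mpr ⟨hij, Or.inr (Or.inr h)⟩

theorem not_adj_iff (hij : i ≠ j) :
    ¬(GnC5 n).Adj i j ↔ 2 ≤ i.val ∧ 2 ≤ j.val ∧ i.val / 2 ≠ j.val / 2 := by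
  rw [adj_iff]
  omega

theorem exists_partner_of_lt (h : i < j) : ∃ i' : Fin n, i' ≠ i ∧ i'.val / 2 = i.val / 2 := by
  have hj := j.isLt
  rw [Fin.lt_def] at h
  rcases Nat.mod_two_eq_zero_or_one i.val with heven | hodd
  · exact ⟨⟨i.val + 1, by omega⟩, Fin.ne_of_val_ne (by simp), by simp only; omega⟩
  · exact ⟨⟨i.val - 1, by omega⟩, Fin.ne_of_val_ne (by simp only; omega), by simp only; omega⟩

theorem exists_isRainbowP4 {H : SimpleGraph (Fin n)} (hGH : GnC5 n ≤ H) {c : Sym2 (Fin n) → ℕ}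
    (hc : ProperEdgeColoring H c) {u v a b a' : Fin n} (hu : u.val = 0) (hv : v.val = 1)
    (ha : 2 ≤ a.val) (hb : 2 ≤ b.val) (hab : a.val / 2 ≠ b.val / 2) (hHab : H.Adj a b)
    (ha'a : a' ≠ a) (ha' : a'.val / 2 = a.val / 2) :
    ∃ x y, IsRainbowP4 H c u x y v := by
  have hua : H.Adj u a := hGH (adj_of_val_le_one (by omega) (Fin.ne_of_val_ne (by omega)))
  have hbv : H.Adj b v := hGH (adj_of_val_le_one (by omega) (Fin.ne_of_val_ne (by omega))).symm
  have ha'v : H.Adj a' v := hGH (adj_of_val_le_one (by omega) (Fin.ne_of_val_ne (by omega))).symm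
  have haa' : H.Adj a a' := hGH (adj_of_div_two_eq ha'a.symm ha'.symm)
  by_cases hcol : c s(u, a) = c s(b, v)
  · have hba' : b ≠ a' := Fin.ne_of_val_ne fun h => hab (by rw [h, ha'])
    refine ⟨a, a', isRainbowP4_of_color_ne hc hua haa' ha'v
      (Fin.ne_of_val_ne (by omega)) (Fin.ne_of_val_ne (by omega)) ?_⟩
    rw [hcol, Sym2.eq_swap (a := a')]
    exact hc.ne_of_adj_of_adj hbv ha'v.symm hba'
  · exact ⟨a, b, isRainbowP4_of_color_ne hc hua hHab hbv
      (Fin.ne_of_val_ne (by omega)) (Fin.ne_of_val_ne (by omega)) hcol⟩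

end GnC5

theorem GnC5_added_edge_gives_rainbow_P4_general (n : ℕ)
    (u v : Fin n) (hu : u.val = 0) (hv : v.val = 1)
    (a b : Fin n) (hab : a ≠ b) (hnadj : ¬ (GnC5 n).Adj a b)
    (c : Sym2 (Fin n) → ℕ)
    (hc : ProperEdgeColoring (GnC5 n ⊔ SimpleGraph.fromEdgeSet {s(a, b)}) c) :
    ∃ x y : Fin n, x ≠ y ∧ x ≠ u ∧ x ≠ v ∧ y ≠ u ∧ y ≠ v ∧
      (GnC5 n ⊔ SimpleGraph.fromEdgeSet {s(a, b)}).Adj u x ∧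
      (GnC5 n ⊔ SimpleGraph.fromEdgeSet {s(a, b)}).Adj x y ∧
      (GnC5 n ⊔ SimpleGraph.fromEdgeSet {s(a, b)}).Adj y v ∧
      c s(u, x) ≠ c s(x, y) ∧ c s(u, x) ≠ c s(y, v) ∧ c s(x, y) ≠ c s(y, v) := by
  obtain ⟨ha, hb, hdiv⟩ := (GnC5.not_adj_iff hab).mp hnadj
  have hHab : (GnC5 n ⊔ fromEdgeSet {s(a, b)}).Adj a b := Or.inr ⟨rfl, hab⟩
  obtain ⟨x, y, hxy⟩ : ∃ x y, IsRainbowP4 (GnC5 n ⊔ fromEdgeSet {s(a, b)}) c u x y v := by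
    rcases lt_or_gt_of_ne hab with hlt | hlt
    · obtain ⟨a', ha'a, ha'⟩ := GnC5.exists_partner_of_lt hlt
      exact GnC5.exists_isRainbowP4 le_sup_left hc hu hv ha hb hdiv hHab ha'a ha'
    · obtain ⟨b', hb'b, hb'⟩ := GnC5.exists_partner_of_lt hlt
      exact GnC5.exists_isRainbowP4 le_sup_left hc hu hv hb ha hdiv.symm hHab.symm hb'b hb'
  exact ⟨x, y, hxy⟩

/-- For `n ≥ 9` and any pair of nonadjacent vertices `a, b` of `G(n, C₅)`, every
proper edge-coloring of `G(n, C₅) + ab` contains a rainbow path on 4 vertices with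
endpoints the two universal vertices `u` and `v`. -/
theorem GnC5_added_edge_gives_rainbow_P4 (n : ℕ) (hn : 9 ≤ n)
    (u v : Fin n) (hu : u.val = 0) (hv : v.val = 1)
    (a b : Fin n) (hab : a ≠ b) (hnadj : ¬ (GnC5 n).Adj a b)
    (c : Sym2 (Fin n) → ℕ)
    (hc : ProperEdgeColoring (GnC5 n ⊔ SimpleGraph.fromEdgeSet {s(a, b)}) c) :
    ∃ x y : Fin n, x ≠ y ∧ x ≠ u ∧ x ≠ v ∧ y ≠ u ∧ y ≠ v ∧
      (GnC5 n ⊔ SimpleGraph.fromEdgeSet {s(a, b)}).Adj u x ∧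
      (GnC5 n ⊔ SimpleGraph.fromEdgeSet {s(a, b)}).Adj x y ∧
      (GnC5 n ⊔ SimpleGraph.fromEdgeSet {s(a, b)}).Adj y v ∧
      c s(u, x) ≠ c s(x, y) ∧ c s(u, x) ≠ c s(y, v) ∧ c s(x, y) ≠ c s(y, v) :=
  GnC5_added_edge_gives_rainbow_P4_general n u v hu hv a b hab hnadj c hc
end

section
/- Let G be a rainbow C_4-saturated graph with vertex set V and let D ⊆ V be a dominating set. For a connected component C of G[V∖D], let f(C) be the number of edges of G with at least one endpoint in V(C); call C sparse if f(C) = 2|V(C)| − 1. Let L be the set of vertices that lie in some sparse component and have degree exactly 2 in G. Then there exists a set S ⊆ D with |S| ≤ 35 such that either (1) every vertex of L has a neighbor in S (L ⊆ N(S)), or (2) every sparse component C of G[V∖D] with V(C) ⊄ N(S) satisfies |V(C) ∩ N(S)| ≥ 5. -/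
/-- The subgraph of `G` on the same vertex set keeping only the edges with both
endpoints in `A` (used to model the induced subgraph `G[A]`). -/
def restrictTo {V : Type*} (G : SimpleGraph V) (A : Set V) : SimpleGraph V :=
  SimpleGraph.fromRel (fun x y => G.Adj x y ∧ x ∈ A ∧ y ∈ A)

/-- The vertex set of the connected component of `x` in the graph `H`. -/
def compOf {V : Type*} (H : SimpleGraph V) (x : V) : Set V := {y | H.Reachable x y}

/-- `f(C)`: the number of edges of `G` with at least one endpoint in `C`. -/
noncomputable def edgesTouching {V : Type*} (G : SimpleGraph V) (C : Set V) : ℕ :=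
  {e | e ∈ G.edgeSet ∧ ∃ w ∈ C, w ∈ e}.ncard

/-- A component `C` of `G[V ∖ D]` is sparse if `f(C) = 2|V(C)| − 1`. -/
def SparseComp {V : Type*} (G : SimpleGraph V) (C : Set V) : Prop :=
  edgesTouching G C + 1 = 2 * C.ncard

/-- `L`: the set of vertices lying in some sparse component of `G[V ∖ D]` that
have degree exactly 2 in `G`. -/
def Lset {V : Type*} (G : SimpleGraph V) (D : Set V) : Set V :=
  {w | w ∉ D ∧ SparseComp G (compOf (restrictTo G Dᶜ) w) ∧ (G.neighborSet w).ncard = 2}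

/-!
Counting the edges touching it shows that a sparse component of `G[V ∖ D]` is a tree whose vertices
each have a unique neighbor in `D`. Hence each `w ∈ L` has one neighbor `dm w` in `D` and one
neighbor `a w` outside `D`, and the parity of BFS levels properly 2-colors every sparse component.
Take `S = dm '' L`. For two leaves of equal parity whose dominators `d ≠ d'` are nonadjacent,
saturation joins the leaves by a path of length three, which forces `d = dm (a w')` or
`d' = dm (a w)`. So among the dominators of one parity class every non-edge has the form `{d, φ d}`, which
yields a clique on a third of them; as `K₆ ⊇ K₂,₄` contains a rainbow `C₄` under every proper
coloring, each class has at most 15 dominators, and the first alternative holds with `|S| ≤ 30`.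
-/

section RainbowSaturation

open SimpleGraph

variable {V : Type*}

section Components

variable {G H : SimpleGraph V} {A D : Set V} {x y u v : V}

theorem restrictTo_adj : (restrictTo G A).Adj u v ↔ G.Adj u v ∧ u ∈ A ∧ v ∈ A := by
  simp only [restrictTo, fromRel_adj]
  constructor
  · rintro ⟨-, ⟨h, hu, hv⟩ | ⟨h, hv, hu⟩⟩
    exacts [⟨h, hu, hv⟩, ⟨h.symm, hu, hv⟩]
  · rintro ⟨h, hu, hv⟩
    exact ⟨h.ne, Or.inl ⟨h, hu, hv⟩⟩

theorem restrictTo_le : restrictTo G A ≤ G := fun _ _ h => (restrictTo_adj.mp h).1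

theorem mem_compOf : y ∈ compOf H x ↔ H.Reachable x y := Iff.rfl

theorem mem_compOf_self : x ∈ compOf H x := Reachable.refl x

theorem compOf_eq_of_mem (h : y ∈ compOf H x) : compOf H y = compOf H x :=
  Set.ext fun _ => ⟨(mem_compOf.mp h).trans, (mem_compOf.mp h).symm.trans⟩

theorem SimpleGraph.Adj.mem_compOf (h : H.Adj u v) (hu : u ∈ compOf H x) : v ∈ compOf H x :=
  (_root_.mem_compOf.mp hu).trans h.reachable

theorem disjoint_compOf_restrictTo (hx : x ∉ D) : Disjoint (compOf (restrictTo G Dᶜ) x) D := by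
  refine Set.disjoint_left.mpr fun y hy => ?_
  obtain rfl | hne := eq_or_ne y x
  · exact hx
  obtain ⟨w⟩ := (mem_compOf.mp hy).symm
  obtain ⟨z, hz, -, -⟩ := w.exists_eq_cons_of_ne hne
  exact (restrictTo_adj.mp hz).2.1

theorem mem_compOf_of_adj (hx : x ∉ D) (hxy : G.Adj x y) (hy : y ∉ D) :
    y ∈ compOf (restrictTo G Dᶜ) x :=
  (restrictTo_adj.mpr ⟨hxy, hx, hy⟩).mem_compOf mem_compOf_self

end Components

namespace SimpleGraph

variable {H : SimpleGraph V} {r a b v : V}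

theorem Reachable.exists_adj_dist_add_one (h : H.Reachable r v) (hne : r ≠ v) :
    ∃ u, H.Adj u v ∧ H.dist r u + 1 = H.dist r v := by
  obtain ⟨w, hw⟩ := h.symm.exists_walk_length_eq_dist
  obtain ⟨u, hvu, p, rfl⟩ := w.exists_eq_cons_of_ne hne.symm
  have hu : H.dist r u + 1 ≤ H.dist r v := by
    rw [dist_comm (u := r) (v := u), dist_comm (u := r), ← hw, Walk.length_cons]
    exact Nat.add_le_add_right (dist_le p) 1
  refine ⟨u, hvu.symm, ?_⟩
  rcases hvu.symm.diff_dist_adj (u := r) with h | h | h <;> omega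

theorem exists_bfsTree [Finite V] (H : SimpleGraph V) (r : V) :
    ∃ P ⊆ H.edgeSet ∩ (compOf H r).sym2, P.ncard + 1 = (compOf H r).ncard ∧
      ∀ a b, s(a, b) ∈ P → H.dist r a + 1 = H.dist r b ∨ H.dist r b + 1 = H.dist r a := by
  have : Nonempty V := ⟨r⟩
  choose! π hπ using fun v (hv : v ∈ compOf H r \ {r}) =>
    Reachable.exists_adj_dist_add_one hv.1 (Ne.symm hv.2)
  refine ⟨(fun v => s(v, π v)) '' (compOf H r \ {r}), ?_, ?_, ?_⟩
  · rintro _ ⟨v, hv, rfl⟩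
    have hadj := (hπ v hv).1.symm
    exact ⟨hadj, hv.1, hadj.mem_compOf hv.1⟩
  · rw [Set.InjOn.ncard_image, Set.ncard_sdiff_singleton_add_one mem_compOf_self]
    intro a ha b hb hab
    rcases Sym2.eq_iff.mp hab with ⟨h, -⟩ | ⟨rfl, h⟩
    · exact h
    · have := (hπ _ ha).2
      rw [h] at this
      have := (hπ _ hb).2
      omega
  · rintro a b ⟨v, hv, hab⟩
    rcases Sym2.eq_iff.mp hab with ⟨rfl, rfl⟩ | ⟨rfl, rfl⟩
    exacts [Or.inr (hπ _ hv).2, Or.inl (hπ _ hv).2]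

theorem ncard_compOf_le [Finite V] (H : SimpleGraph V) (r : V) :
    (compOf H r).ncard ≤ (H.edgeSet ∩ (compOf H r).sym2).ncard + 1 := by
  obtain ⟨P, hP, hcard, -⟩ := exists_bfsTree H r
  have := Set.ncard_le_ncard hP
  omega

/-- If the component of `r` has fewer edges than vertices, it is its own BFS tree. -/
theorem dist_add_one_or_of_ncard_lt [Finite V]
    (hlt : (H.edgeSet ∩ (compOf H r).sym2).ncard < (compOf H r).ncard)
    (ha : a ∈ compOf H r) (hab : H.Adj a b) :
    H.dist r a + 1 = H.dist r b ∨ H.dist r b + 1 = H.dist r a := by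
  obtain ⟨P, hP, hcard, hdist⟩ := exists_bfsTree H r
  have hPeq : P = H.edgeSet ∩ (compOf H r).sym2 := Set.eq_of_subset_of_ncard_le hP (by omega)
  exact hdist a b (hPeq ▸ ⟨hab, ha, hab.mem_compOf ha⟩)

end SimpleGraph

section Domination

variable {G : SimpleGraph V} {C D : Set V} {v d₁ d₂ : V}

def edgesBetween (G : SimpleGraph V) (C D : Set V) : Set (Sym2 V) :=
  {e ∈ G.edgeSet | ∃ v ∈ C, ∃ d ∈ D, e = s(v, d)}

theorem exists_mem_adj_of_notMem (hD : ∀ v, v ∈ D ∨ ∃ u ∈ D, G.Adj u v) (hv : v ∉ D) :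
    ∃ d ∈ D, G.Adj v d :=
  ((hD v).resolve_left hv).imp fun _ hd => ⟨hd.1, hd.2.symm⟩

theorem injOn_mk_of_disjoint (hCD : Disjoint C D) {m : V → V} (hm : ∀ v ∈ C, m v ∈ D) :
    Set.InjOn (fun v => s(v, m v)) C := by
  intro a ha b hb hab
  rcases Sym2.eq_iff.mp hab with ⟨h, -⟩ | ⟨h, -⟩
  · exact h
  · exact absurd (h ▸ hm b hb) (hCD.notMem_of_mem_left ha)

theorem image_mk_subset_edgesBetween {m : V → V} (hm : ∀ v ∈ C, m v ∈ D ∧ G.Adj v (m v)) :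
    (fun v => s(v, m v)) '' C ⊆ edgesBetween G C D := by
  rintro _ ⟨v, hv, rfl⟩
  exact ⟨(hm v hv).2, v, hv, m v, (hm v hv).1, rfl⟩

theorem ncard_le_ncard_edgesBetween [Finite V] (hCD : Disjoint C D)
    (hdom : ∀ v ∈ C, ∃ d ∈ D, G.Adj v d) : C.ncard ≤ (edgesBetween G C D).ncard := by
  choose! m hm using hdom
  rw [← (injOn_mk_of_disjoint hCD fun v hv => (hm v hv).1).ncard_image]
  exact Set.ncard_le_ncard (image_mk_subset_edgesBetween hm)

/-- With no more `C`–`D` edges than vertices in `C`, the edges to chosen `D`-neighbors are all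
of them. -/
theorem eq_of_adj_of_ncard_edgesBetween_le [Finite V] (hCD : Disjoint C D)
    (hdom : ∀ v ∈ C, ∃ d ∈ D, G.Adj v d) (hle : (edgesBetween G C D).ncard ≤ C.ncard)
    (hv : v ∈ C) (hd₁ : d₁ ∈ D) (hd₂ : d₂ ∈ D) (h₁ : G.Adj v d₁) (h₂ : G.Adj v d₂) :
    d₁ = d₂ := by
  choose! m hm using hdom
  have hinj := injOn_mk_of_disjoint hCD fun v hv => (hm v hv).1
  have himage : (fun v => s(v, m v)) '' C = edgesBetween G C D :=
    Set.eq_of_subset_of_ncard_le (image_mk_subset_edgesBetween hm) (hinj.ncard_image ▸ hle)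
  have hm_eq : ∀ d ∈ D, G.Adj v d → d = m v := by
    intro d hd h
    have hvd : s(v, d) ∈ edgesBetween G C D := ⟨h, v, hv, d, hd, rfl⟩
    rw [← himage] at hvd
    obtain ⟨w, hw, hwe⟩ := hvd
    rcases Sym2.eq_iff.mp hwe with ⟨rfl, h'⟩ | ⟨-, h'⟩
    · exact h'.symm
    · exact absurd (h' ▸ (hm w hw).1) (hCD.notMem_of_mem_left hv)
  rw [hm_eq d₁ hd₁ h₁, hm_eq d₂ hd₂ h₂]

end Domination

noncomputable def levelParity (H : SimpleGraph V) (x : V) : ℕ :=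
  H.dist (Quot.out (H.connectedComponentMk x)) x % 2

theorem levelParity_lt_two (H : SimpleGraph V) (x : V) : levelParity H x < 2 :=
  Nat.mod_lt _ two_pos

section Sparse

variable [Finite V] {G : SimpleGraph V} {D : Set V} {x₀ x y v d₁ d₂ : V}

/-- `f(C) ≥ e(G[C]) + e(C, D) ≥ (|C| - 1) + |C|`, so for a sparse component both inequalities are
tight: `G[C]` is a tree and every vertex of `C` has exactly one neighbor in `D`. -/
theorem SparseComp.ncard_edgeSet_lt_and_ncard_edgesBetween_le
    (hsp : SparseComp G (compOf (restrictTo G Dᶜ) x₀)) (hD : ∀ v, v ∈ D ∨ ∃ u ∈ D, G.Adj u v)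
    (hx₀ : x₀ ∉ D) :
    ((restrictTo G Dᶜ).edgeSet ∩ (compOf (restrictTo G Dᶜ) x₀).sym2).ncard <
        (compOf (restrictTo G Dᶜ) x₀).ncard ∧
      (edgesBetween G (compOf (restrictTo G Dᶜ) x₀) D).ncard ≤
        (compOf (restrictTo G Dᶜ) x₀).ncard := by
  set H := restrictTo G Dᶜ
  set C := compOf H x₀
  have hCD : Disjoint C D := disjoint_compOf_restrictTo hx₀
  have hHG : (H.edgeSet ∩ C.sym2).ncard ≤ (G.edgeSet ∩ C.sym2).ncard :=
    Set.ncard_le_ncard (Set.inter_subset_inter_left _ (edgeSet_mono restrictTo_le))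
  have htouch : (G.edgeSet ∩ C.sym2).ncard + (edgesBetween G C D).ncard ≤ edgesTouching G C := by
    rw [← Set.ncard_union_eq]
    · refine Set.ncard_le_ncard ?_
      rintro e (⟨he, hC⟩ | ⟨he, v, hv, d, -, rfl⟩)
      · induction e with | _ a b => exact ⟨he, a, hC.1, Sym2.mem_mk_left a b⟩
      · exact ⟨he, v, hv, Sym2.mem_mk_left v _⟩
    · rw [Set.disjoint_left]
      rintro _ ⟨-, hC⟩ ⟨-, v, -, d, hd, rfl⟩
      exact hCD.notMem_of_mem_right hd hC.2
  have : C.ncard ≤ (H.edgeSet ∩ C.sym2).ncard + 1 := ncard_compOf_le H x₀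
  have := ncard_le_ncard_edgesBetween hCD fun _ hv =>
    exists_mem_adj_of_notMem hD (hCD.notMem_of_mem_left hv)
  unfold SparseComp at hsp
  omega

theorem SparseComp.eq_of_adj (hsp : SparseComp G (compOf (restrictTo G Dᶜ) x₀))
    (hD : ∀ v, v ∈ D ∨ ∃ u ∈ D, G.Adj u v) (hx₀ : x₀ ∉ D)
    (hv : v ∈ compOf (restrictTo G Dᶜ) x₀) (hd₁ : d₁ ∈ D) (hd₂ : d₂ ∈ D)
    (h₁ : G.Adj v d₁) (h₂ : G.Adj v d₂) : d₁ = d₂ :=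
  have hCD := disjoint_compOf_restrictTo hx₀
  eq_of_adj_of_ncard_edgesBetween_le hCD
    (fun _ hv => exists_mem_adj_of_notMem hD (hCD.notMem_of_mem_left hv))
    (hsp.ncard_edgeSet_lt_and_ncard_edgesBetween_le hD hx₀).2 hv hd₁ hd₂ h₁ h₂

theorem SparseComp.levelParity_ne (hsp : SparseComp G (compOf (restrictTo G Dᶜ) x₀))
    (hD : ∀ v, v ∈ D ∨ ∃ u ∈ D, G.Adj u v) (hx₀ : x₀ ∉ D)
    (hx : x ∈ compOf (restrictTo G Dᶜ) x₀) (hxy : G.Adj x y) (hy : y ∉ D) :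
    levelParity (restrictTo G Dᶜ) x ≠ levelParity (restrictTo G Dᶜ) y := by
  set H := restrictTo G Dᶜ
  have hHxy : H.Adj x y :=
    restrictTo_adj.mpr ⟨hxy, (disjoint_compOf_restrictTo hx₀).notMem_of_mem_left hx, hy⟩
  have hr : H.Reachable (Quot.out (H.connectedComponentMk x)) x :=
    ConnectedComponent.exact (Quot.out_eq _)
  have hC : compOf H (Quot.out (H.connectedComponentMk x)) = compOf H x₀ :=
    compOf_eq_of_mem ((mem_compOf.mp hx).trans hr.symm)
  have hlt := (hsp.ncard_edgeSet_lt_and_ncard_edgesBetween_le hD hx₀).1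
  rw [← hC] at hlt
  have := dist_add_one_or_of_ncard_lt (H := H) hlt hr hHxy
  simp only [levelParity, ConnectedComponent.sound hHxy.reachable.symm]
  omega

end Sparse

section Rainbow

variable {G : SimpleGraph V} {c : Sym2 V → ℕ}

theorem injective_of_zmod_four {α : Type*} {g : ZMod 4 → α} (h01 : g 0 ≠ g 1) (h02 : g 0 ≠ g 2)
    (h03 : g 0 ≠ g 3) (h12 : g 1 ≠ g 2) (h13 : g 1 ≠ g 3) (h23 : g 2 ≠ g 3) :
    Function.Injective g := by
  intro a b hab
  fin_cases a <;> fin_cases b <;> first | rfl | exact absurd hab ‹_› | exact absurd hab.symm ‹_›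

theorem ProperEdgeColoring.ne_of_adj (hc : ProperEdgeColoring G c) {a b b' : V}
    (h : G.Adj a b) (h' : G.Adj a b') (hne : b ≠ b') : c s(a, b) ≠ c s(a, b') := by
  refine hc _ h _ h' ?_ ⟨a, Sym2.mem_mk_left _ _, Sym2.mem_mk_left _ _⟩
  rw [Ne, Sym2.eq_iff]
  rintro (⟨-, h⟩ | ⟨-, rfl⟩)
  exacts [hne h, h.ne rfl]

theorem ProperEdgeColoring.hasRainbowCycle_of_adj (hc : ProperEdgeColoring G c) {u x v y : V}
    (hux : G.Adj u x) (hxv : G.Adj x v) (hvy : G.Adj v y) (hyu : G.Adj y u) (huv : u ≠ v)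
    (hxy : x ≠ y) (h₁ : c s(u, x) ≠ c s(v, y)) (h₂ : c s(x, v) ≠ c s(y, u)) :
    HasRainbowCycle G c 4 := by
  have c01 : c s(u, x) ≠ c s(x, v) := Sym2.eq_swap (a := x) ▸ hc.ne_of_adj hux.symm hxv huv
  have c12 : c s(x, v) ≠ c s(v, y) := Sym2.eq_swap (a := v) ▸ hc.ne_of_adj hxv.symm hvy hxy
  have c23 : c s(v, y) ≠ c s(y, u) := Sym2.eq_swap (a := y) ▸ hc.ne_of_adj hvy.symm hyu huv.symm
  have c03 : c s(u, x) ≠ c s(y, u) := Sym2.eq_swap (a := u) ▸ hc.ne_of_adj hux hyu.symm hxy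
  refine ⟨![u, x, v, y], ?_, fun i => ?_, injective_of_zmod_four c01 h₁ c03 c12 h₂ c23⟩
  · exact injective_of_zmod_four hux.ne huv hyu.ne.symm hxv.ne hxy hvy.ne
  · fin_cases i
    exacts [hux, hxv, hvy, hyu]

/-- At most one `xᵢ` gives `v xᵢ` the color of `u x₁`, and at most one gives `u xᵢ` the color of
`v x₁`; any other `xᵢ` closes the rainbow cycle `u x₁ v xᵢ`. -/
theorem ProperEdgeColoring.hasRainbowCycle_of_four_common_neighbors
    (hc : ProperEdgeColoring G c) {u v x₁ x₂ x₃ x₄ : V} (huv : u ≠ v)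
    (h₁₂ : x₁ ≠ x₂) (h₁₃ : x₁ ≠ x₃) (h₁₄ : x₁ ≠ x₄) (h₂₃ : x₂ ≠ x₃) (h₂₄ : x₂ ≠ x₄)
    (h₃₄ : x₃ ≠ x₄) (hu₁ : G.Adj u x₁) (hu₂ : G.Adj u x₂) (hu₃ : G.Adj u x₃) (hu₄ : G.Adj u x₄)
    (hv₁ : G.Adj v x₁) (hv₂ : G.Adj v x₂) (hv₃ : G.Adj v x₃) (hv₄ : G.Adj v x₄) :
    HasRainbowCycle G c 4 := by
  obtain ⟨w, hw, huw, hvw, hA, hB⟩ : ∃ w, x₁ ≠ w ∧ G.Adj u w ∧ G.Adj v w ∧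
      c s(u, x₁) ≠ c s(v, w) ∧ c s(v, x₁) ≠ c s(u, w) := by
    by_contra! h
    replace h : ∀ w, x₁ ≠ w → G.Adj u w → G.Adj v w →
        c s(u, x₁) = c s(v, w) ∨ c s(v, x₁) = c s(u, w) :=
      fun w h₁ h₂ h₃ => or_iff_not_imp_left.mpr (h w h₁ h₂ h₃)
    rcases h x₂ h₁₂ hu₂ hv₂ with h₂ | h₂ <;> rcases h x₃ h₁₃ hu₃ hv₃ with h₃ | h₃ <;>
      rcases h x₄ h₁₄ hu₄ hv₄ with h₄ | h₄ <;>
      first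
      | exact hc.ne_of_adj hv₂ hv₃ h₂₃ (h₂.symm.trans h₃)
      | exact hc.ne_of_adj hv₂ hv₄ h₂₄ (h₂.symm.trans h₄)
      | exact hc.ne_of_adj hv₃ hv₄ h₃₄ (h₃.symm.trans h₄)
      | exact hc.ne_of_adj hu₂ hu₃ h₂₃ (h₂.symm.trans h₃)
      | exact hc.ne_of_adj hu₂ hu₄ h₂₄ (h₂.symm.trans h₄)
      | exact hc.ne_of_adj hu₃ hu₄ h₃₄ (h₃.symm.trans h₄)
  refine hc.hasRainbowCycle_of_adj hu₁ hv₁.symm hvw huw.symm huv hw hA ?_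
  rwa [Sym2.eq_swap (a := x₁), Sym2.eq_swap (a := w)]

theorem ProperEdgeColoring.hasRainbowCycle_of_isClique (hc : ProperEdgeColoring G c)
    {s : Finset V} (hs : G.IsClique (s : Set V)) (h6 : 6 ≤ s.card) : HasRainbowCycle G c 4 := by
  obtain ⟨f⟩ : Nonempty (Fin 6 ↪ s) := Function.Embedding.nonempty_of_card_le (by simpa using h6)
  have hne : ∀ i j, i ≠ j → (f i : V) ≠ f j := fun i j h =>
    Subtype.val_injective.ne (f.injective.ne h)
  have hadj : ∀ i j, i ≠ j → G.Adj (f i) (f j) := fun i j h => hs (f i).2 (f j).2 (hne i j h)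
  exact hc.hasRainbowCycle_of_four_common_neighbors (hne 0 1 (by decide))
    (hne 2 3 (by decide)) (hne 2 4 (by decide)) (hne 2 5 (by decide)) (hne 3 4 (by decide))
    (hne 3 5 (by decide)) (hne 4 5 (by decide))
    (hadj 0 2 (by decide)) (hadj 0 3 (by decide)) (hadj 0 4 (by decide)) (hadj 0 5 (by decide))
    (hadj 1 2 (by decide)) (hadj 1 3 (by decide)) (hadj 1 4 (by decide)) (hadj 1 5 (by decide))

theorem ProperEdgeColoring.update_sup_edge [DecidableEq V] (hc : ProperEdgeColoring G c)
    {x y : V} {n : ℕ} (hn : ∀ e ∈ G.edgeSet, c e ≠ n) :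
    ProperEdgeColoring (G ⊔ fromEdgeSet {s(x, y)}) (Function.update c s(x, y) n) := by
  have hG : ∀ e ∈ (G ⊔ fromEdgeSet {s(x, y)}).edgeSet, e ≠ s(x, y) → e ∈ G.edgeSet := by
    intro e he hne
    simpa [hne] using he
  intro e₁ he₁ e₂ he₂ hne hshare
  by_cases h₁ : e₁ = s(x, y)
  · subst h₁
    rw [Function.update_self, Function.update_of_ne hne.symm]
    exact (hn e₂ (hG e₂ he₂ hne.symm)).symm
  by_cases h₂ : e₂ = s(x, y)
  · subst h₂
    rw [Function.update_self, Function.update_of_ne hne]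
    exact hn e₁ (hG e₁ he₁ hne)
  rw [Function.update_of_ne h₁, Function.update_of_ne h₂]
  exact hc _ (hG _ he₁ h₁) _ (hG _ he₂ h₂) hne hshare

theorem adj_of_adj_sup_edge {x y a b : V} (h : (G ⊔ fromEdgeSet {s(x, y)}).Adj a b)
    (hne : s(a, b) ≠ s(x, y)) : G.Adj a b := by
  simpa [hne] using h

/-- Give the new edge `xy` a fresh color: the rainbow `C₄` that saturation provides must use `xy`,
and its other three edges, colored differently, form the path. -/
theorem RainbowSat.exists_adj_adj_adj [Finite V] (hG : RainbowSat G 4) {x y : V} (hne : x ≠ y)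
    (hxy : ¬ G.Adj x y) : ∃ u v, G.Adj x u ∧ G.Adj u v ∧ G.Adj v y := by
  classical
  obtain ⟨c, hc, hfree⟩ := hG.1
  obtain ⟨n, hn⟩ := ((Set.toFinite G.edgeSet).image c).exists_notMem
  obtain ⟨f, hf, hadj, hrainbow⟩ :=
    hG.2 x y hne hxy _ (hc.update_sup_edge fun e he h => hn ⟨e, he, h⟩)
  obtain ⟨k, hk⟩ : ∃ k, s(f k, f (k + 1)) = s(x, y) := by
    by_contra! h
    refine hfree ⟨f, hf, fun i => adj_of_adj_sup_edge (hadj i) (h i), ?_⟩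
    simpa only [Function.update_of_ne (h _)] using hrainbow
  have hG' : ∀ j : ZMod 4, j ≠ 0 → G.Adj (f (k + j)) (f (k + (j + 1))) := by
    intro j hj
    rw [← add_assoc]
    refine adj_of_adj_sup_edge (hadj _) fun h => hj ?_
    simpa using hrainbow (congrArg (Function.update c s(x, y) n) (h.trans hk.symm))
  have h₁ := hG' 1 (by decide)
  have h₂ := hG' 2 (by decide)
  have h₃ := hG' 3 (by decide)
  rw [show (1 + 1 : ZMod 4) = 2 from rfl] at h₁
  rw [show (2 + 1 : ZMod 4) = 3 from rfl] at h₂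
  rw [show (3 + 1 : ZMod 4) = 0 from rfl, add_zero] at h₃
  rcases Sym2.eq_iff.mp hk with ⟨rfl, rfl⟩ | ⟨rfl, rfl⟩
  · exact ⟨f (k + 3), f (k + 2), h₃.symm, h₂.symm, h₁.symm⟩
  · exact ⟨f (k + 2), f (k + 3), h₁, h₂, h₃⟩

end Rainbow

namespace SimpleGraph

variable {G : SimpleGraph V}

theorem exists_card_filter_not_adj_le_two [DecidableEq V] [DecidableRel G.Adj] (φ : V → V)
    {A : Finset V} (hA : A.Nonempty)
    (hφ : ∀ a ∈ A, ∀ b ∈ A, a ≠ b → ¬ G.Adj a b → φ a = b ∨ φ b = a) :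
    ∃ a ∈ A, (A.filter fun b => a ≠ b ∧ ¬ G.Adj a b).card ≤ 2 := by
  set P := (A ×ˢ A).filter fun q => q.1 ≠ q.2 ∧ ¬ G.Adj q.1 q.2
  have hP : P.card ≤ A.card * 2 := by
    have hsub : P ⊆ A.image (fun a => (a, φ a)) ∪ A.image (fun a => (φ a, a)) := by
      rintro ⟨a, b⟩ hq
      simp only [P, Finset.mem_filter, Finset.mem_product] at hq
      rcases hφ a hq.1.1 b hq.1.2 hq.2.1 hq.2.2 with rfl | rfl
      · exact Finset.mem_union_left _ (Finset.mem_image_of_mem _ hq.1.1)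
      · exact Finset.mem_union_right _ (Finset.mem_image_of_mem _ hq.1.2)
    calc P.card ≤ _ := Finset.card_le_card hsub
      _ ≤ _ := Finset.card_union_le _ _
      _ ≤ A.card * 2 := by
        have := Finset.card_image_le (s := A) (f := fun a => (a, φ a))
        have := Finset.card_image_le (s := A) (f := fun a => (φ a, a))
        omega
  obtain ⟨a, ha, hfiber⟩ := Finset.exists_card_fiber_le_of_card_le_mul (f := Prod.fst) hA hP
  refine ⟨a, ha, le_trans ?_ hfiber⟩
  rw [← Finset.card_image_of_injective _ (Prod.mk_right_injective a)]
  refine Finset.card_le_card fun q hq => ?_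
  obtain ⟨b, hb, rfl⟩ := Finset.mem_image.mp hq
  simp only [Finset.mem_filter] at hb
  simp [P, ha, hb]

/-- If every non-edge inside `A` is of the form `{a, φ a}`, the complement of `G` on `A` has at
most `|A|` edges, so some vertex misses at most two others and greedy selection finds a clique on
a third of `A`. -/
theorem exists_isClique_of_forall_not_adj (φ : V → V) (A : Finset V)
    (hφ : ∀ a ∈ A, ∀ b ∈ A, a ≠ b → ¬ G.Adj a b → φ a = b ∨ φ b = a) :
    ∃ B ⊆ A, A.card ≤ 3 * B.card ∧ G.IsClique (B : Set V) := by
  classical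
  induction A using Finset.strongInduction with
  | H A ih =>
  obtain rfl | hA := A.eq_empty_or_nonempty
  · exact ⟨∅, subset_rfl, by simp, by simp⟩
  obtain ⟨a, ha, hcard⟩ := exists_card_filter_not_adj_le_two φ hA hφ
  set N := insert a (A.filter fun b => a ≠ b ∧ ¬ G.Adj a b)
  have hN : N ⊆ A := Finset.insert_subset ha (Finset.filter_subset _ _)
  obtain ⟨B, hB, hcardB, hclique⟩ := ih (A \ N) (Finset.sdiff_ssubset hN ⟨a, by simp [N]⟩)
    fun b hb b' hb' => hφ b (Finset.sdiff_subset hb) b' (Finset.sdiff_subset hb')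
  have hadj : ∀ b ∈ B, a ≠ b → G.Adj a b := by
    intro b hb hab
    have := (Finset.mem_sdiff.mp (hB hb))
    by_contra hnadj
    exact this.2 (Finset.mem_insert_of_mem (Finset.mem_filter.mpr ⟨this.1, hab, hnadj⟩))
  have haB : a ∉ B := fun h => (Finset.mem_sdiff.mp (hB h)).2 (Finset.mem_insert_self a _)
  refine ⟨insert a B, Finset.insert_subset ha (hB.trans Finset.sdiff_subset), ?_, ?_⟩
  · have := Finset.card_le_card_sdiff_add_card (s := A) (t := N)
    have : N.card ≤ (A.filter fun b => a ≠ b ∧ ¬ G.Adj a b).card + 1 := Finset.card_insert_le _ _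
    rw [Finset.card_insert_of_notMem haB]
    omega
  · rw [Finset.coe_insert]
    exact isClique_insert.mpr ⟨hclique, hadj⟩

end SimpleGraph

section Leaves

variable [Finite V] {G : SimpleGraph V} {D : Set V} {w w' d d' d₁ d₂ a a' : V}

theorem eq_of_adj_of_mem_Lset (hD : ∀ v, v ∈ D ∨ ∃ u ∈ D, G.Adj u v) (hw : w ∈ Lset G D)
    (hwa : G.Adj w a) (ha : a ∉ D) (hd₁ : d₁ ∈ D) (hd₂ : d₂ ∈ D) (h₁ : G.Adj a d₁)
    (h₂ : G.Adj a d₂) : d₁ = d₂ :=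
  hw.2.1.eq_of_adj hD hw.1 (mem_compOf_of_adj hw.1 hwa ha) hd₁ hd₂ h₁ h₂

theorem exists_neighborSet_eq_pair (hD : ∀ v, v ∈ D ∨ ∃ u ∈ D, G.Adj u v) (hw : w ∈ Lset G D)
    (hd : d ∈ D) (hwd : G.Adj w d) : ∃ a ∉ D, G.neighborSet w = {d, a} := by
  obtain ⟨hwD, hsp, hdeg⟩ := hw
  have hd' : d ∈ G.neighborSet w := hwd
  obtain ⟨a, ha⟩ : ∃ a, G.neighborSet w \ {d} = {a} :=
    Set.ncard_eq_one.mp (by rw [Set.ncard_sdiff_singleton_of_mem hd', hdeg])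
  have hN : G.neighborSet w = {d, a} := by
    rw [← ha, Set.insert_sdiff_singleton, Set.insert_eq_of_mem hd']
  have haN : a ∈ G.neighborSet w \ {d} := ha ▸ Set.mem_singleton a
  exact ⟨a, fun haD => haN.2 (hsp.eq_of_adj hD hwD mem_compOf_self haD hd haN.1 hwd), hN⟩

/-- Two leaves of the same level parity are not adjacent and neither are their neighbors outside
`D`; so the path of length three that saturation provides between them must use exactly one of
their neighbors in `D`. -/
theorem RainbowSat.adj_or_adj_of_mem_Lset (hG : RainbowSat G 4)
    (hD : ∀ v, v ∈ D ∨ ∃ u ∈ D, G.Adj u v) (hw : w ∈ Lset G D) (hw' : w' ∈ Lset G D)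
    (hpar : levelParity (restrictTo G Dᶜ) w = levelParity (restrictTo G Dᶜ) w')
    (hd : d ∈ D) (ha : a ∉ D) (ha' : a' ∉ D) (hN : G.neighborSet w = {d, a})
    (hN' : G.neighborSet w' = {d', a'}) (hdd' : d ≠ d') (hnadj : ¬ G.Adj d d') :
    G.Adj d a' ∨ G.Adj a d' := by
  have hwa : G.Adj w a := by simp [← mem_neighborSet, hN]
  have hwa' : G.Adj w' a' := by simp [← mem_neighborSet, hN']
  have hpa := hw.2.1.levelParity_ne hD hw.1 mem_compOf_self hwa ha
  have hpa' := hw'.2.1.levelParity_ne hD hw'.1 mem_compOf_self hwa' ha'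
  have hww' : ¬ G.Adj w w' := fun h => hw.2.1.levelParity_ne hD hw.1 mem_compOf_self h hw'.1 hpar
  have haa' : ¬ G.Adj a a' := fun h => by
    have := hw.2.1.levelParity_ne hD hw.1 (mem_compOf_of_adj hw.1 hwa ha) h ha'
    have := levelParity_lt_two (restrictTo G Dᶜ) a
    have := levelParity_lt_two (restrictTo G Dᶜ) a'
    have := levelParity_lt_two (restrictTo G Dᶜ) w
    omega
  have hne : w ≠ w' := by
    rintro rfl
    have : d ∈ ({d', a'} : Set V) := hN' ▸ hN ▸ Set.mem_insert d {a}
    rcases this with rfl | rfl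
    exacts [hdd' rfl, ha' hd]
  obtain ⟨u, v, hwu, huv, hvw'⟩ := hG.exists_adj_adj_adj hne hww'
  have hu : u ∈ ({d, a} : Set V) := hN ▸ hwu
  have hv : v ∈ ({d', a'} : Set V) := hN' ▸ hvw'.symm
  rcases hu with rfl | rfl <;> rcases hv with rfl | rfl
  exacts [absurd huv hnadj, Or.inl huv, Or.inr huv, absurd huv haa']

/-- Among the `D`-neighbors of the leaves of one level parity, every non-edge is `{dm w, dm a}`
with `a` the other neighbor of the leaf `w`, and there is no `K₆`. -/
theorem RainbowSat.ncard_image_levelParity_le (hG : RainbowSat G 4)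
    (hD : ∀ v, v ∈ D ∨ ∃ u ∈ D, G.Adj u v) {dm : V → V}
    (hdm : ∀ v ∉ D, dm v ∈ D ∧ G.Adj v (dm v)) (p : ℕ) :
    (dm '' {w ∈ Lset G D | levelParity (restrictTo G Dᶜ) w = p}).ncard ≤ 15 := by
  set A := dm '' {w ∈ Lset G D | levelParity (restrictTo G Dᶜ) w = p}
  choose! leaf hleaf using fun d (hd : d ∈ A) => hd
  choose! other hother using fun w (hw : w ∈ Lset G D) =>
    exists_neighborSet_eq_pair hD hw (hdm w hw.1).1 (hdm w hw.1).2
  have hφ : ∀ d ∈ A, ∀ d' ∈ A, d ≠ d' → ¬ G.Adj d d' →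
      dm (other (leaf d)) = d' ∨ dm (other (leaf d')) = d := by
    intro d hd d' hd' hne hnadj
    obtain ⟨⟨hw, hpw⟩, hdw⟩ := hleaf d hd
    obtain ⟨⟨hw', hpw'⟩, hdw'⟩ := hleaf d' hd'
    obtain ⟨ha, hN⟩ := hother _ hw
    obtain ⟨ha', hN'⟩ := hother _ hw'
    rw [hdw] at hN
    rw [hdw'] at hN'
    have hdD : d ∈ D := hdw ▸ (hdm _ hw.1).1
    have hd'D : d' ∈ D := hdw' ▸ (hdm _ hw'.1).1
    rcases hG.adj_or_adj_of_mem_Lset hD hw hw' (hpw.trans hpw'.symm) hdD ha ha' hN hN' hne hnadj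
      with h | h
    · have hwa' : G.Adj (leaf d') (other (leaf d')) := by simp [← mem_neighborSet, hN']
      exact Or.inr (eq_of_adj_of_mem_Lset hD hw' hwa' ha' (hdm _ ha').1 hdD (hdm _ ha').2 h.symm)
    · have hwa : G.Adj (leaf d) (other (leaf d)) := by simp [← mem_neighborSet, hN]
      exact Or.inl (eq_of_adj_of_mem_Lset hD hw hwa ha (hdm _ ha).1 hd'D (hdm _ ha).2 h)
  by_contra! h16
  obtain ⟨c, hc, hfree⟩ := hG.1
  obtain ⟨B, -, hcard, hB⟩ :=
    exists_isClique_of_forall_not_adj _ (Set.toFinite A).toFinset (by simpa using hφ)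
  rw [← Set.ncard_eq_toFinset_card] at hcard
  exact hfree (hc.hasRainbowCycle_of_isClique hB (by omega))

end Leaves

end RainbowSaturation

/-- Claim 7 (core neighborhoods): in a rainbow `C₄`-saturated graph `G` with a
dominating set `D`, there is a set `S ⊆ D` with `|S| ≤ 35` such that either every
vertex of `L` has a neighbor in `S`, or every sparse component `C` of `G[V ∖ D]`
not contained in `N(S)` meets `N(S)` in at least 5 vertices. -/
theorem rainbow_sat_C4_core_nbhds {V : Type*} [Fintype V] (G : SimpleGraph V)
    (hG : RainbowSat G 4) (D : Set V) (hD : ∀ v, v ∈ D ∨ ∃ u ∈ D, G.Adj u v) :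
    ∃ S ⊆ D, S.ncard ≤ 35 ∧
      ((∀ w ∈ Lset G D, ∃ s ∈ S, G.Adj s w) ∨
        (∀ x, x ∉ D → SparseComp G (compOf (restrictTo G Dᶜ) x) →
          ¬ (compOf (restrictTo G Dᶜ) x ⊆ {w | ∃ s ∈ S, G.Adj s w}) →
          5 ≤ (compOf (restrictTo G Dᶜ) x ∩ {w | ∃ s ∈ S, G.Adj s w}).ncard)) := by
  choose! dm hdm using fun v (hv : v ∉ D) => exists_mem_adj_of_notMem hD hv
  refine ⟨dm '' Lset G D, ?_, ?_, Or.inl fun w hw => ⟨dm w, ⟨w, hw, rfl⟩, (hdm w hw.1).2.symm⟩⟩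
  · rintro _ ⟨w, hw, rfl⟩
    exact (hdm w hw.1).1
  have hsplit : dm '' Lset G D ⊆
      dm '' {w ∈ Lset G D | levelParity (restrictTo G Dᶜ) w = 0} ∪
        dm '' {w ∈ Lset G D | levelParity (restrictTo G Dᶜ) w = 1} := by
    rintro _ ⟨w, hw, rfl⟩
    have := levelParity_lt_two (restrictTo G Dᶜ) w
    obtain h | h : levelParity (restrictTo G Dᶜ) w = 0 ∨ levelParity (restrictTo G Dᶜ) w = 1 := by
      omega
    exacts [Or.inl ⟨w, ⟨hw, h⟩, rfl⟩, Or.inr ⟨w, ⟨hw, h⟩, rfl⟩]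
  calc (dm '' Lset G D).ncard ≤ _ := Set.ncard_le_ncard hsplit
    _ ≤ _ := Set.ncard_union_le _ _
    _ ≤ 35 := by
      have := hG.ncard_image_levelParity_le hD hdm 0
      have := hG.ncard_image_levelParity_le hD hdm 1
      omega
end
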